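/- arXiv:0808.1167 — 6 statements merged into one kernel-verified Lean document; each statement's English description precedes it below -/
import Mathlib

section
/- Let A be an n×n matrix over a field F. Then the tensor pair (E_n; A) has tensor rank n (i.e., the pair of matrices E_n and A can be simultaneously written as a sum of n rank-one tensors) if and only if A is diagonalizable over F (similar over F to a diagonal matrix). -/
open Matrix BigOperators

/-- A pair of matrices `(A; B)` admits a simultaneous decomposition into `r`
rank-one tensors. -/
def pairDecomp {F : Type*} [Field F] {m n : Type*} [Fintype m] [Fintype n] (r : ℕ)
    (A B : Matrix m n F) : Prop :=
  ∃ (a : Fin r → m → F) (b : Fin r → n → F) (α β : Fin r → F),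
    A = ∑ i, α i • Matrix.vecMulVec (a i) (b i) ∧
    B = ∑ i, β i • Matrix.vecMulVec (a i) (b i)

/-- The tensor rank of the pair of matrices `(A; B)`. -/
noncomputable def pairRank {F : Type*} [Field F] {m n : Type*} [Fintype m] [Fintype n]
    (A B : Matrix m n F) : ℕ :=
  sInf {r | pairDecomp r A B}

/-- The pair `(A; B)` of rectangular matrices is diagonalizable. -/
def pairDiag {F : Type*} [Field F] {m n : ℕ} (A B : Matrix (Fin m) (Fin n) F) : Prop :=
  ∃ (P : (Matrix (Fin m) (Fin m) F)ˣ) (Q : (Matrix (Fin n) (Fin n) F)ˣ),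
    (∀ (i : Fin m) (j : Fin n), (i : ℕ) ≠ (j : ℕ) → ((P : Matrix (Fin m) (Fin m) F) * A * (Q : Matrix (Fin n) (Fin n) F)) i j = 0) ∧
    (∀ (i : Fin m) (j : Fin n), (i : ℕ) ≠ (j : ℕ) → ((P : Matrix (Fin m) (Fin m) F) * B * (Q : Matrix (Fin n) (Fin n) F)) i j = 0)

/-- The nilpotent Jordan block of size `k`. -/
def jordanNil {F : Type*} [Field F] (k : ℕ) : Matrix (Fin k) (Fin k) F :=
  Matrix.of fun i j => if (i : ℕ) + 1 = (j : ℕ) then 1 else 0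

/-- Any rank-one decomposition yields a matrix factorization. -/
private lemma mul_of_decomp {F : Type*} [Field F] {n r : ℕ}
    (a b : Fin r → Fin n → F) (γ : Fin r → F)
    (C : Matrix (Fin n) (Fin n) F) (h : C = ∑ i, γ i • Matrix.vecMulVec (a i) (b i)) :
    (Matrix.of fun i (j : Fin r) => γ j * a j i) * (Matrix.of fun (j : Fin r) k => b j k) = C := by
  subst h
  ext i k
  simp [Matrix.mul_apply, Matrix.sum_apply, Matrix.vecMulVec_apply, mul_assoc]

/-- The pair `(E_n; A)` has tensor rank `n` iff `A` is diagonalizable over `F`. -/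
theorem rank_eq_iff_diagonalizable {F : Type*} [Field F] {n : ℕ}
    (A : Matrix (Fin n) (Fin n) F) :
    pairRank (1 : Matrix (Fin n) (Fin n) F) A = n ↔
      ∃ P : (Matrix (Fin n) (Fin n) F)ˣ,
        Matrix.IsDiag ((P : Matrix (Fin n) (Fin n) F) * A * (↑P⁻¹ : Matrix (Fin n) (Fin n) F)) := by
  -- lower bound: any decomposition has at least n terms
  have hlb : ∀ r, pairDecomp r (1 : Matrix (Fin n) (Fin n) F) A → n ≤ r := by
    rintro r ⟨a, b, α, β, h1, -⟩
    have hMN := mul_of_decomp a b α 1 h1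
    have h1rank : ((1 : Matrix (Fin n) (Fin n) F)).rank = n := by
      rw [Matrix.rank_one (n := Fin n) (R := F), Fintype.card_fin]
    calc n = ((1 : Matrix (Fin n) (Fin n) F)).rank := h1rank.symm
      _ ≤ (Matrix.of fun i (j : Fin r) => α j * a j i).rank := by
          rw [← hMN]; exact Matrix.rank_mul_le_left _ _
      _ ≤ r := by simpa using Matrix.rank_le_card_width (Matrix.of fun i (j : Fin r) => α j * a j i)
  constructor
  · intro h
    rcases Nat.eq_zero_or_pos n with hn | hn
    · subst hn
      exact ⟨1, fun {i j} _ => i.elim0⟩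
    · -- the set of decompositions is nonempty, and n belongs to it
      have hne : {r | pairDecomp r (1 : Matrix (Fin n) (Fin n) F) A}.Nonempty := by
        by_contra hc
        rw [Set.not_nonempty_iff_eq_empty] at hc
        rw [pairRank, hc, Nat.sInf_empty] at h
        omega
      have hmem : pairDecomp n (1 : Matrix (Fin n) (Fin n) F) A := by
        have := Nat.sInf_mem hne
        rwa [show sInf {r | pairDecomp r (1 : Matrix (Fin n) (Fin n) F) A}
            = pairRank (1 : Matrix (Fin n) (Fin n) F) A from rfl, h] at this
      obtain ⟨a, b, α, β, h1, hA⟩ := hmem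
      set M : Matrix (Fin n) (Fin n) F := Matrix.of fun i j => α j * a j i with hM
      set N : Matrix (Fin n) (Fin n) F := Matrix.of fun j k => b j k with hN
      have hMN : M * N = 1 := mul_of_decomp a b α 1 h1
      have hNM : N * M = 1 := mul_eq_one_comm.mp hMN
      -- each α j is nonzero
      have hα : ∀ j, α j ≠ 0 := by
        intro j hj
        have := congrFun (congrFun hNM j) j
        simp only [Matrix.mul_apply, Matrix.one_apply_eq, hM, hN, Matrix.of_apply, hj,
          zero_mul, mul_zero, Finset.sum_const_zero] at this
        exact one_ne_zero this.symm
      set d : Fin n → F := fun j => β j / α j with hd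
      -- A = M * diagonal d * N
      have hA' : A = M * Matrix.diagonal d * N := by
        have h2 := mul_of_decomp a b β A hA
        rw [← h2]
        congr 1
        ext i j
        simp only [Matrix.mul_apply, Matrix.diagonal_apply, hM, Matrix.of_apply,
          mul_ite, mul_zero]
        rw [Finset.sum_eq_single j (by intro k _ hk; simp [hk]) (by simp)]
        simp only [if_pos rfl, hd]
        rw [mul_right_comm, div_eq_inv_mul, mul_inv_cancel_left₀ (hα j)]
        simp
      refine ⟨⟨N, M, hNM, hMN⟩, ?_⟩
      have hcoe : ((⟨N, M, hNM, hMN⟩ : (Matrix (Fin n) (Fin n) F)ˣ) : Matrix (Fin n) (Fin n) F) = N := rfl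
      have hcoe' : ((⟨N, M, hNM, hMN⟩ : (Matrix (Fin n) (Fin n) F)ˣ)⁻¹ : (Matrix (Fin n) (Fin n) F)ˣ)
          = (⟨M, N, hMN, hNM⟩ : (Matrix (Fin n) (Fin n) F)ˣ) := rfl
      rw [hcoe, hcoe']
      show Matrix.IsDiag (N * A * M)
      have : N * A * M = Matrix.diagonal d := by
        rw [hA']
        calc N * (M * Matrix.diagonal d * N) * M
            = (N * M) * (Matrix.diagonal d * (N * M)) := by
              simp only [Matrix.mul_assoc]
          _ = Matrix.diagonal d := by rw [hNM, one_mul, mul_one]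
      rw [this]
      exact Matrix.isDiag_diagonal d
  · rintro ⟨P, hP⟩
    set D : Matrix (Fin n) (Fin n) F := (P : Matrix (Fin n) (Fin n) F) * A * (↑P⁻¹ : Matrix (Fin n) (Fin n) F) with hD
    have hAeq : A = (↑P⁻¹ : Matrix (Fin n) (Fin n) F) * D * (P : Matrix (Fin n) (Fin n) F) := by
      rw [hD]
      calc A = ((↑P⁻¹ : Matrix (Fin n) (Fin n) F) * ↑P) * A * ((↑P⁻¹ : Matrix (Fin n) (Fin n) F) * ↑P) := by
            rw [P.inv_mul, one_mul, mul_one]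
        _ = (↑P⁻¹ : Matrix (Fin n) (Fin n) F) * (↑P * A * (↑P⁻¹ : Matrix (Fin n) (Fin n) F)) * ↑P := by
            simp only [Matrix.mul_assoc]
    -- exhibit a decomposition with n terms
    have hmem : pairDecomp n (1 : Matrix (Fin n) (Fin n) F) A := by
      refine ⟨fun j i => (↑P⁻¹ : Matrix (Fin n) (Fin n) F) i j,
        fun j k => (P : Matrix (Fin n) (Fin n) F) j k, fun _ => 1, fun j => D j j, ?_, ?_⟩
      · ext i k
        have := congrFun (congrFun P.inv_mul i) k
        simp only [Matrix.mul_apply] at this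
        simpa [Matrix.sum_apply, Matrix.vecMulVec_apply] using this.symm
      · ext i k
        rw [hAeq]
        simp only [Matrix.sum_apply, Matrix.smul_apply, Matrix.vecMulVec_apply, smul_eq_mul,
          Matrix.mul_apply]
        simp only [Finset.sum_mul]
        rw [Finset.sum_comm]
        refine Finset.sum_congr rfl fun j _ => ?_
        rw [Finset.sum_eq_single j (fun l _ hl => by
          have : D j l = 0 := hP (Ne.symm hl)
          simp [this]) (by simp)]
        ring
    exact le_antisymm (Nat.sInf_le hmem) (le_csInf ⟨n, hmem⟩ hlb)
end

section
/- Let M be the companion matrix of a monic polynomial f(x) of degree n over a field F with at least n distinct elements. Then there exists a matrix N of rank at most 1 such that M − N is diagonalizable over F. In particular, the tensor rank of (E_n; M) is at most n + 1. -/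
open Matrix BigOperators

/-- The companion matrix of a monic polynomial `f` of degree `n`. -/
def companionMatrix {F : Type*} [Field F] (n : ℕ) (f : Polynomial F) :
    Matrix (Fin n) (Fin n) F :=
  Matrix.of fun i j =>
    if (j : ℕ) = n - 1 then -f.coeff (i : ℕ)
    else if (i : ℕ) = (j : ℕ) + 1 then 1 else 0

/-- Auxiliary: sum of scaled rank-one matrices is a triple product with a diagonal. -/
lemma sum_smul_vecMulVec {F : Type*} [Field F] {n : ℕ} (A B : Matrix (Fin n) (Fin n) F)
    (d : Fin n → F) :
    ∑ i, d i • Matrix.vecMulVec (fun r => A r i) (fun c => B i c)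
      = A * Matrix.diagonal d * B := by
  ext r c
  simp [Matrix.sum_apply, Matrix.vecMulVec_apply, Matrix.mul_apply, Matrix.diagonal,
    Finset.sum_comm, mul_comm, mul_left_comm]

/-- Auxiliary: Vandermonde intertwines the companion matrix and the diagonal matrix. -/
lemma vandermonde_mul_companion {F : Type*} [Field F] {n : ℕ} (lam : Fin n → F)
    (g : Polynomial F) (hg : g.Monic) (hdeg : g.natDegree = n)
    (hroot : ∀ i, g.eval (lam i) = 0) :
    Matrix.vandermonde lam * companionMatrix n g = Matrix.diagonal lam * Matrix.vandermonde lam := by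
  ext i j
  rw [Matrix.mul_apply, Matrix.diagonal_mul, Matrix.vandermonde_apply]
  have hn : 0 < n := j.pos
  by_cases hj : (j : ℕ) = n - 1
  · have hC : ∀ k : Fin n, companionMatrix n g k j = -g.coeff (k : ℕ) := fun k => by
      simp [companionMatrix, hj]
    simp only [Matrix.vandermonde_apply, hC]
    have he : g.eval (lam i) = ∑ k ∈ Finset.range (n + 1), g.coeff k * lam i ^ k := by
      rw [Polynomial.eval_eq_sum_range]; rw [hdeg]
    rw [Finset.sum_range_succ] at he
    have hcn : g.coeff n = 1 := by
      have := hg.coeff_natDegree; rwa [hdeg] at this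
    rw [hroot i, hcn, one_mul] at he
    have hsum : ∑ k ∈ Finset.range n, g.coeff k * lam i ^ k = -lam i ^ n :=
      eq_neg_of_add_eq_zero_left he.symm
    calc ∑ k : Fin n, lam i ^ (k : ℕ) * -g.coeff (k : ℕ)
        = -∑ k ∈ Finset.range n, g.coeff k * lam i ^ k := by
          rw [Fin.sum_univ_eq_sum_range (fun k => lam i ^ k * -g.coeff k)]
          rw [← Finset.sum_neg_distrib]
          exact Finset.sum_congr rfl fun k _ => by ring
      _ = lam i ^ n := by rw [hsum, neg_neg]
      _ = lam i * lam i ^ (j : ℕ) := by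
          rw [hj, ← pow_succ', Nat.sub_add_cancel hn]
  · have hjn : (j : ℕ) + 1 < n := by
      have := j.isLt; omega
    rw [Finset.sum_eq_single (⟨(j : ℕ) + 1, hjn⟩ : Fin n)
      (fun b _ hb => by
        have hb' : (b : ℕ) ≠ (j : ℕ) + 1 := fun h => hb (Fin.ext h)
        simp [companionMatrix, hj, hb'])
      (by simp)]
    simp [companionMatrix, hj, pow_succ', Matrix.vandermonde_apply]

/-- For the companion matrix `M` of a monic polynomial of degree `n` over a field with at
least `n` elements, there is a rank at most one matrix `N` with `M - N` diagonalizable;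
in particular `rank (E_n; M) ≤ n + 1`. -/
theorem companion_perturb_diagonalizable {F : Type*} [Field F] {n : ℕ} (f : Polynomial F)
    (hf : f.Monic) (hdeg : f.natDegree = n) (hcard : ∃ s : Finset F, s.card = n) :
    (∃ N : Matrix (Fin n) (Fin n) F, N.rank ≤ 1 ∧
      ∃ P : (Matrix (Fin n) (Fin n) F)ˣ,
        Matrix.IsDiag ((P : Matrix (Fin n) (Fin n) F) * (companionMatrix n f - N) *
          (↑P⁻¹ : Matrix (Fin n) (Fin n) F))) ∧
    pairRank (1 : Matrix (Fin n) (Fin n) F) (companionMatrix n f) ≤ n + 1 := by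
  obtain ⟨s, hs⟩ := hcard
  -- n distinct field elements
  set lam : Fin n → F := fun i => (s.equivFin.symm (Fin.cast hs.symm i) : F) with hlam
  have hinj : Function.Injective lam := by
    intro a b hab
    have := Subtype.ext hab
    have := s.equivFin.symm.injective this
    simpa [Fin.ext_iff] using congrArg Fin.val this
  -- the polynomial g with distinct roots lam
  set g : Polynomial F := ∏ i, (Polynomial.X - Polynomial.C (lam i)) with hgdef
  have hgm : g.Monic := Polynomial.monic_prod_of_monic _ _ fun i _ => Polynomial.monic_X_sub_C _
  have hgdeg : g.natDegree = n := by
    rw [hgdef, Polynomial.natDegree_prod _ _ fun i _ => (Polynomial.monic_X_sub_C (lam i)).ne_zero]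
    simp
  have hroot : ∀ i, g.eval (lam i) = 0 := fun i => by
    rw [hgdef]
    simp only [Polynomial.eval_prod]
    exact Finset.prod_eq_zero (Finset.mem_univ i) (by simp)
  -- the Vandermonde matrix is invertible
  set V : Matrix (Fin n) (Fin n) F := Matrix.vandermonde lam with hV
  have hdet : V.det ≠ 0 := by
    rw [hV, ne_eq, Matrix.det_vandermonde_eq_zero_iff]
    rintro ⟨i, j, hij, hne⟩
    exact hne (hinj hij)
  have hVu : IsUnit V.det := isUnit_iff_ne_zero.mpr hdet
  have hVV : V * V⁻¹ = 1 := Matrix.mul_nonsing_inv V hVu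
  have hVV' : V⁻¹ * V = 1 := Matrix.nonsing_inv_mul V hVu
  set P : (Matrix (Fin n) (Fin n) F)ˣ := ⟨V, V⁻¹, hVV, hVV'⟩ with hP
  -- the rank-one perturbation
  set c : Fin n → F := fun i => g.coeff (i : ℕ) - f.coeff (i : ℕ) with hc
  set e : Fin n → F := fun j => if (j : ℕ) = n - 1 then 1 else 0 with he
  set N : Matrix (Fin n) (Fin n) F := Matrix.vecMulVec c e with hN
  have hMN : companionMatrix n f - N = companionMatrix n g := by
    ext i j
    simp only [Matrix.sub_apply, hN, Matrix.vecMulVec_apply, companionMatrix, Matrix.of_apply,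
      hc, he]
    by_cases hj : (j : ℕ) = n - 1 <;> simp [hj] <;> ring
  have hrank : N.rank ≤ 1 := by
    rw [hN, Matrix.vecMulVec_eq Unit]
    exact le_trans (Matrix.rank_mul_le_left _ _)
      (le_trans (Matrix.rank_le_card_width _) (by simp))
  have hkey : V * companionMatrix n g = Matrix.diagonal lam * V :=
    vandermonde_mul_companion lam g hgm hgdeg hroot
  have hconj : V * companionMatrix n g * V⁻¹ = Matrix.diagonal lam := by
    rw [hkey, Matrix.mul_assoc, hVV, Matrix.mul_one]
  have hCg : companionMatrix n g = V⁻¹ * Matrix.diagonal lam * V := by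
    rw [Matrix.mul_assoc, ← hkey, ← Matrix.mul_assoc, hVV', Matrix.one_mul]
  constructor
  · exact ⟨N, hrank, P, by
      rw [hMN]
      have hPinv : (↑P⁻¹ : Matrix (Fin n) (Fin n) F) = V⁻¹ := rfl
      rw [hPinv]
      show Matrix.IsDiag (V * companionMatrix n g * V⁻¹)
      rw [hconj]
      exact Matrix.isDiag_diagonal _⟩
  · apply Nat.sInf_le
    refine ⟨Fin.snoc (fun i r => V⁻¹ r i) c, Fin.snoc (fun i => V i) e,
      Fin.snoc (fun _ => 1) 0, Fin.snoc lam 1, ?_, ?_⟩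
    · rw [Fin.sum_univ_castSucc]
      simp only [Fin.snoc_castSucc, Fin.snoc_last, zero_smul, add_zero]
      rw [sum_smul_vecMulVec V⁻¹ V (fun _ => 1)]
      rw [Matrix.diagonal_one, Matrix.mul_one, hVV']
    · rw [Fin.sum_univ_castSucc]
      simp only [Fin.snoc_castSucc, Fin.snoc_last, one_smul]
      rw [sum_smul_vecMulVec V⁻¹ V lam, ← hCg, ← hN, ← hMN, sub_add_cancel]
end

section
/- Let F be the real or complex numbers and let α ∈ F. There exists an ℓ×ℓ×2 tensor T of rank at most 1 such that (αE_ℓ + J_ℓ; E_ℓ) − T is diagonalizable; in particular the tensor rank of (αE_ℓ + J_ℓ; E_ℓ) over F is at most ℓ + 1. -/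
/-!
Choose distinct `v₀, …, v_{ℓ-1} ∈ F` (here `v_k = k`) and the row `c` with `∑ⱼ cⱼ v_kʲ = v_kˡ`,
i.e. `c = V⁻¹ (v_kˡ)ₖ` for the Vandermonde matrix `V`. Then the column `(v_kⁱ)ᵢ` is an eigenvector
of the companion matrix `J_ℓ + e_ℓ cᵀ` with eigenvalue `v_k`, so `αE_ℓ + J_ℓ + e_ℓ cᵀ` is
diagonalized by `Vᵀ` while `E_ℓ` stays the identity; so `T = -(e_ℓ cᵀ; 0)` works. A
diagonalizable pair of `ℓ × ℓ` matrices has tensor rank at most `ℓ`, and adding `T` back gives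
`ℓ + 1`.
-/

open Matrix BigOperators

lemma Matrix.mul_diagonal_mul_eq_sum_vecMulVec {R l m n : Type*} [CommSemiring R] [Fintype m]
    [DecidableEq m] (M : Matrix l m R) (d : m → R) (N : Matrix m n R) :
    M * diagonal d * N = ∑ i, d i • vecMulVec (fun j => M j i) (N i) := by
  ext j k
  rw [mul_apply]
  simp only [mul_diagonal, Matrix.sum_apply, smul_apply, vecMulVec_apply, smul_eq_mul]
  exact Finset.sum_congr rfl fun i _ => by ring

section
variable {F : Type*} [Field F]

lemma pairDecomp.add {m n : Type*} [Fintype m] [Fintype n] {r s : ℕ} {A B A' B' : Matrix m n F}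
    (h : pairDecomp r A B) (h' : pairDecomp s A' B') :
    pairDecomp (r + s) (A + A') (B + B') := by
  obtain ⟨a, b, α, β, rfl, rfl⟩ := h
  obtain ⟨a', b', α', β', rfl, rfl⟩ := h'
  exact ⟨Fin.append a a', Fin.append b b', Fin.append α α', Fin.append β β',
    by simp [Fin.sum_univ_add], by simp [Fin.sum_univ_add]⟩

lemma pairDiag.pairDecomp {m : ℕ} {A B : Matrix (Fin m) (Fin m) F} (h : pairDiag A B) :
    pairDecomp m A B := by
  obtain ⟨P, Q, hA, hB⟩ := h
  have hdiag : ∀ X : Matrix (Fin m) (Fin m) F,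
      (∀ i j : Fin m, (i : ℕ) ≠ j → (P.val * X * Q.val) i j = 0) →
      X = P⁻¹.val * diagonal (diag (P.val * X * Q.val)) * Q⁻¹.val := by
    intro X hX
    have hX' : IsDiag (P.val * X * Q.val) := fun i j hij => hX i j (Fin.val_ne_of_ne hij)
    rw [hX'.diagonal_diag]
    simp [Matrix.mul_assoc]
  exact ⟨_, _, _, _, (hdiag A hA).trans (mul_diagonal_mul_eq_sum_vecMulVec _ _ _),
    (hdiag B hB).trans (mul_diagonal_mul_eq_sum_vecMulVec _ _ _)⟩

lemma pairDiag_of_mul_eq_mul_diagonal {m : ℕ} {A V : Matrix (Fin m) (Fin m) F} (hV : IsUnit V)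
    (d : Fin m → F) (h : A * V = V * diagonal d) : pairDiag A 1 := by
  obtain ⟨U, rfl⟩ := hV
  have hUAU : U⁻¹.val * A * U.val = diagonal d := by
    rw [Matrix.mul_assoc, h, ← Matrix.mul_assoc, U.inv_mul, Matrix.one_mul]
  refine ⟨U⁻¹, U, fun i j hij => ?_, fun i j hij => ?_⟩
  · rw [hUAU]
    exact diagonal_apply_ne _ (Fin.ne_of_val_ne hij)
  · rw [Matrix.mul_one, U.inv_mul]
    exact one_apply_ne (Fin.ne_of_val_ne hij)

lemma jordanNil_mul_apply {ℓ : ℕ} {n : Type*} (M : Matrix (Fin ℓ) n F) (i : Fin ℓ) (k : n) :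
    ((jordanNil ℓ : Matrix (Fin ℓ) (Fin ℓ) F) * M) i k =
      if h : (i : ℕ) + 1 < ℓ then M ⟨i + 1, h⟩ k else 0 := by
  rw [mul_apply]
  simp only [jordanNil, of_apply, ite_mul, one_mul, zero_mul]
  split_ifs with h
  · rw [Finset.sum_eq_single ⟨i + 1, h⟩]
    · simp
    · intro j _ hj
      exact if_neg fun hij => hj (Fin.ext hij.symm)
    · simp
  · exact Finset.sum_eq_zero fun j _ => if_neg fun hij : (i : ℕ) + 1 = j => h (hij ▸ j.isLt)

def lastUnitVec (ℓ : ℕ) : Fin ℓ → F := fun i => if (i : ℕ) + 1 = ℓ then 1 else 0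

noncomputable def companionRow {ℓ : ℕ} (v : Fin ℓ → F) : Fin ℓ → F :=
  (vandermonde v)⁻¹ *ᵥ fun k => v k ^ ℓ

lemma isUnit_det_vandermonde {ℓ : ℕ} {v : Fin ℓ → F} (hv : Function.Injective v) :
    IsUnit (vandermonde v).det :=
  isUnit_iff_ne_zero.mpr (det_vandermonde_ne_zero_iff.mpr hv)

lemma vandermonde_mulVec_companionRow {ℓ : ℕ} {v : Fin ℓ → F} (hv : Function.Injective v) :
    vandermonde v *ᵥ companionRow v = fun k => v k ^ ℓ := by
  rw [companionRow, mulVec_mulVec, mul_nonsing_inv _ (isUnit_det_vandermonde hv), one_mulVec]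

lemma jordanNil_add_companion_mul_vandermonde_transpose {ℓ : ℕ} {v : Fin ℓ → F}
    (hv : Function.Injective v) :
    (jordanNil ℓ + vecMulVec (lastUnitVec ℓ) (companionRow v)) * (vandermonde v)ᵀ =
      (vandermonde v)ᵀ * diagonal v := by
  ext i k
  rw [Matrix.add_mul, vecMulVec_mul, vecMul_transpose, vandermonde_mulVec_companionRow hv,
    Matrix.add_apply, jordanNil_mul_apply, vecMulVec_apply, mul_diagonal]
  simp only [lastUnitVec, transpose_apply, vandermonde_apply]
  split_ifs with hlt hlast hlast
  · omega
  · ring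
  · rw [← pow_succ, hlast]; ring
  · omega

lemma pairDiag_smul_one_add_jordanNil_add_companion {ℓ : ℕ} (α : F) {v : Fin ℓ → F}
    (hv : Function.Injective v) :
    pairDiag (α • 1 + jordanNil ℓ + vecMulVec (lastUnitVec ℓ) (companionRow v)) 1 := by
  refine pairDiag_of_mul_eq_mul_diagonal
    ((isUnit_iff_isUnit_det _).mpr (by rw [det_transpose]; exact isUnit_det_vandermonde hv))
    (fun k => α + v k) ?_
  rw [add_assoc, Matrix.add_mul, jordanNil_add_companion_mul_vandermonde_transpose hv,
      Matrix.smul_mul, Matrix.one_mul]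
  ext i k
  simp only [Matrix.add_apply, Matrix.smul_apply, mul_diagonal, smul_eq_mul]
  ring

end

/-- For `F = ℝ` or `ℂ` and `α ∈ F`, there is a rank at most one tensor `T` such that
`(αE_ℓ + J_ℓ; E_ℓ) − T` is diagonalizable; in particular
`rank (αE_ℓ + J_ℓ; E_ℓ) ≤ ℓ + 1`. -/
theorem jordan_pair_perturb_diagonalizable {F : Type*} [RCLike F] (ℓ : ℕ) (α : F) :
    (∃ T₁ T₂ : Matrix (Fin ℓ) (Fin ℓ) F, pairDecomp 1 T₁ T₂ ∧
      pairDiag ((α • (1 : Matrix (Fin ℓ) (Fin ℓ) F) + jordanNil ℓ) - T₁)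
        ((1 : Matrix (Fin ℓ) (Fin ℓ) F) - T₂)) ∧
    pairRank (α • (1 : Matrix (Fin ℓ) (Fin ℓ) F) + jordanNil ℓ)
      (1 : Matrix (Fin ℓ) (Fin ℓ) F) ≤ ℓ + 1 := by
  set A : Matrix (Fin ℓ) (Fin ℓ) F := α • 1 + jordanNil ℓ
  set c : Fin ℓ → F := companionRow fun k : Fin ℓ => ((k : ℕ) : F)
  set T : Matrix (Fin ℓ) (Fin ℓ) F := vecMulVec (lastUnitVec ℓ) c
  have hT : pairDecomp 1 (-T) 0 :=
    ⟨fun _ => lastUnitVec ℓ, fun _ => c, fun _ => -1, fun _ => 0, by simp [T], by simp⟩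
  have hdiag : pairDiag (A - -T) (1 - 0) := by
    rw [sub_neg_eq_add, sub_zero]
    exact pairDiag_smul_one_add_jordanNil_add_companion α
      (Nat.cast_injective.comp Fin.val_injective)
  refine ⟨⟨-T, 0, hT, hdiag⟩, Nat.sInf_le ?_⟩
  simpa using hdiag.pairDecomp.add hT
end

section
/- Over the real numbers, with s ≠ 0, the 2k×2k pair (C_k(c,s) + J_k ⊗ E_2; E_{2k}) becomes diagonalizable after subtracting a suitable tensor of rank at most 1; in particular its tensor rank is at most 2k + 1. -/
open Matrix BigOperators

/-- A pair of square matrices is diagonalizable: `P A Q` and `P B Q` are diagonal for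
some nonsingular `P`, `Q`. -/
def pairDiagSq {F : Type*} [Field F] {m : Type*} [Fintype m] [DecidableEq m]
    (A B : Matrix m m F) : Prop :=
  ∃ (P Q : (Matrix m m F)ˣ),
    Matrix.IsDiag ((P : Matrix m m F) * A * (Q : Matrix m m F)) ∧
    Matrix.IsDiag ((P : Matrix m m F) * B * (Q : Matrix m m F))

open Polynomial

namespace RJP

variable (k : ℕ) (c s : ℝ)

noncomputable def lam : ℂ := ⟨c, s⟩

/-- complex Krylov vectors: `u r = Ahat ^ r` applied to `e (k-1)`. -/
noncomputable def u (r : ℕ) (i : Fin k) : ℂ :=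
  (r.choose (k - 1 - i.val) : ℂ) * (lam c s) ^ (r - (k - 1 - i.val))

lemma choose_pow_rec (z : ℂ) (r m : ℕ) (hm : 1 ≤ m) :
    ((r+1).choose m : ℂ) * z ^ (r + 1 - m)
      = z * ((r.choose m : ℂ) * z ^ (r - m))
        + (r.choose (m-1) : ℂ) * z ^ (r - (m-1)) := by
  rcases le_or_gt m r with hle | hlt
  · have e1 : r + 1 - m = (r - m) + 1 := by omega
    have e2 : r - (m - 1) = (r - m) + 1 := by omega
    obtain ⟨m', rfl⟩ : ∃ m', m = m' + 1 := ⟨m - 1, by omega⟩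
    have e3 : (r+1).choose (m'+1) = r.choose m' + r.choose (m'+1) :=
      Nat.choose_succ_succ r m'
    rw [e1, e2, e3]
    simp only [Nat.add_sub_cancel]
    push_cast
    ring
  · rcases eq_or_lt_of_le (Nat.succ_le_of_lt hlt) with heq | hlt2
    · have h1 : r.choose m = 0 := Nat.choose_eq_zero_of_lt hlt
      have h2 : (r+1).choose m = 1 := by rw [← heq]; exact Nat.choose_self _
      have h4 : r - (m-1) = 0 := by omega
      have h5 : r + 1 - m = 0 := by omega
      have h3 : m - 1 = r := by omega
      rw [h1, h2, h4, h5, h3]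
      simp
    · have h1 : r.choose m = 0 := Nat.choose_eq_zero_of_lt hlt
      have h2 : (r+1).choose m = 0 := Nat.choose_eq_zero_of_lt hlt2
      have h3 : r.choose (m-1) = 0 := Nat.choose_eq_zero_of_lt (by omega)
      rw [h1, h2, h3]
      simp

lemma u_rec (r : ℕ) (i : Fin k) :
    u k c s (r+1) i
      = lam c s * u k c s r i
        + (if h : i.val + 1 < k then u k c s r ⟨i.val+1, h⟩ else 0) := by
  unfold u
  by_cases h : i.val + 1 < k
  · simp only [dif_pos h]
    have hm' : k - 1 - (i.val + 1) = (k - 1 - i.val) - 1 := by omega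
    rw [hm']
    exact choose_pow_rec _ r _ (by omega)
  · simp only [dif_neg h]
    have hm : k - 1 - i.val = 0 := by omega
    rw [hm]
    have e1 : r + 1 - 0 = (r - 0) + 1 := by omega
    rw [e1]
    simp [pow_succ]
    ring

end RJP


namespace RJP

open Complex

variable (k : ℕ) (c s : ℝ)

noncomputable def Ahat : Matrix (Fin k) (Fin k) ℂ := lam c s • 1 + jordanNil k

lemma sum_ite_eqnat {R : Type*} [NonAssocSemiring R] (f : Fin k → R) (t : ℕ) :
    ∑ j : Fin k, (if t = (j : ℕ) then 1 else 0) * f j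
      = if h : t < k then f ⟨t, h⟩ else 0 := by
  by_cases h : t < k
  · rw [dif_pos h, Finset.sum_eq_single ⟨t, h⟩]
    · simp
    · intro b _ hb
      have : ¬(t = (b : ℕ)) := by
        intro e; exact hb (Fin.ext e.symm)
      simp [this]
    · intro hmem; exact absurd (Finset.mem_univ _) hmem
  · rw [dif_neg h]
    apply Finset.sum_eq_zero
    intro j _
    have : ¬(t = (j : ℕ)) := by have := j.isLt; omega
    simp [this]

lemma mulVec_Ahat (z : Fin k → ℂ) (i : Fin k) :
    (Ahat k c s *ᵥ z) i
      = lam c s * z i + (if h : i.val + 1 < k then z ⟨i.val + 1, h⟩ else 0) := by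
  unfold Ahat jordanNil
  simp only [Matrix.mulVec, dotProduct, Matrix.add_apply, Matrix.smul_apply,
    Matrix.of_apply, add_mul, Finset.sum_add_distrib]
  congr 1
  · rw [Finset.sum_eq_single i]
    · simp
    · intro b _ hb; simp [Matrix.one_apply, Ne.symm hb]
    · intro hmem; exact absurd (Finset.mem_univ _) hmem
  · exact sum_ite_eqnat k z (i.val + 1)

lemma mulVec_u (r : ℕ) : Ahat k c s *ᵥ u k c s r = u k c s (r + 1) := by
  funext i
  rw [mulVec_Ahat, ← u_rec]

lemma pow_mulVec_u (r : ℕ) : (Ahat k c s) ^ r *ᵥ u k c s 0 = u k c s r := by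
  induction r with
  | zero => simp
  | succ n ih =>
    rw [pow_succ', ← Matrix.mulVec_mulVec, ih, mulVec_u]

lemma jordanNil_pow (m : ℕ) (i j : Fin k) :
    ((jordanNil k : Matrix (Fin k) (Fin k) ℂ) ^ m) i j
      = if (i : ℕ) + m = (j : ℕ) then 1 else 0 := by
  induction m generalizing j with
  | zero =>
    simp only [pow_zero, Matrix.one_apply]
    congr 1
    simp [Fin.ext_iff, eq_comm]
  | succ n ih =>
    rw [pow_succ]
    simp only [Matrix.mul_apply]
    have : ∀ l : Fin k, ((jordanNil k : Matrix (Fin k) (Fin k) ℂ) ^ n) i l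
        * (jordanNil k : Matrix (Fin k) (Fin k) ℂ) l j
        = (if (i:ℕ) + n = (l:ℕ) then 1 else 0) * (if (l:ℕ) + 1 = (j:ℕ) then 1 else 0) := by
      intro l; rw [ih]; rfl
    rw [Finset.sum_congr rfl (fun l _ => this l),
      sum_ite_eqnat k (fun l => if (l:ℕ) + 1 = (j:ℕ) then 1 else 0) ((i:ℕ) + n)]
    by_cases h : (i:ℕ) + n < k
    · rw [dif_pos h]
      congr 1
    · rw [dif_neg h]
      have : ¬((i:ℕ) + (n+1) = (j:ℕ)) := by have := j.isLt; omega
      simp [this]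

lemma jordanNil_pow_k : (jordanNil k : Matrix (Fin k) (Fin k) ℂ) ^ k = 0 := by
  ext i j
  rw [jordanNil_pow]
  have : ¬((i:ℕ) + k = (j:ℕ)) := by have := j.isLt; omega
  simp [this]

end RJP

namespace RJP

variable (k : ℕ) (c s : ℝ)

noncomputable def pR : Polynomial ℝ := ((X - C c) ^ 2 + C (s ^ 2)) ^ k

lemma base_monic : (((X : Polynomial ℝ) - C c) ^ 2 + C (s ^ 2)).Monic := by
  apply Polynomial.Monic.add_of_left ((monic_X_sub_C c).pow 2)
  have h2 : (((X : Polynomial ℝ) - C c) ^ 2).degree = 2 := by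
    rw [Polynomial.degree_pow, Polynomial.degree_X_sub_C]; rfl
  rw [h2]
  exact lt_of_le_of_lt Polynomial.degree_C_le (by norm_num)

lemma base_natDegree : (((X : Polynomial ℝ) - C c) ^ 2 + C (s ^ 2)).natDegree = 2 := by
  have h2 : (((X : Polynomial ℝ) - C c) ^ 2).degree = 2 := by
    rw [Polynomial.degree_pow, Polynomial.degree_X_sub_C]; rfl
  have := Polynomial.degree_add_eq_left_of_degree_lt (p := ((X : Polynomial ℝ) - C c) ^ 2)
    (q := C (s ^ 2)) (by rw [h2]; exact lt_of_le_of_lt Polynomial.degree_C_le (by norm_num))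
  apply Polynomial.natDegree_eq_of_degree_eq_some
  rw [this, h2]; rfl

lemma pR_monic : (pR k c s).Monic := by unfold pR; exact (base_monic c s).pow k

lemma pR_natDegree : (pR k c s).natDegree = 2 * k := by
  unfold pR
  rw [Polynomial.natDegree_pow, base_natDegree, Nat.mul_comm]

lemma pR_coeff_top : (pR k c s).coeff (2 * k) = 1 := by
  have := (pR_monic k c s).coeff_natDegree
  rwa [pR_natDegree] at this

noncomputable def pC : Polynomial ℂ := (pR k c s).map (algebraMap ℝ ℂ)

lemma pC_natDegree : (pC k c s).natDegree = 2 * k := by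
  unfold pC
  rw [(pR_monic k c s).natDegree_map, pR_natDegree]

lemma pC_factor :
    pC k c s = ((X - C (lam c s)) * (X - C (lam c (-s)))) ^ k := by
  unfold pC pR
  rw [Polynomial.map_pow]
  congr 1
  rw [Polynomial.map_add, Polynomial.map_pow, Polynomial.map_sub, Polynomial.map_X,
    Polynomial.map_C, Polynomial.map_C]
  have h1 : lam c s = Complex.ofReal c + Complex.ofReal s * Complex.I := by
    simp [lam, Complex.ext_iff]
  have h2 : lam c (-s) = Complex.ofReal c - Complex.ofReal s * Complex.I := by
    simp [lam, Complex.ext_iff]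
  have h3 : (C (Complex.I) : Polynomial ℂ) * C (Complex.I) = -1 := by
    rw [← Polynomial.C_mul, Complex.I_mul_I]; simp
  rw [h1, h2]
  have hC : ∀ x y : ℂ, (C (x + y) : Polynomial ℂ) = C x + C y := fun x y => Polynomial.C_add
  have hC2 : ∀ x y : ℂ, (C (x - y) : Polynomial ℂ) = C x - C y := fun x y => Polynomial.C_sub
  have hC3 : ∀ x y : ℂ, (C (x * y) : Polynomial ℂ) = C x * C y := fun x y => Polynomial.C_mul
  have hC4 : (C ((s:ℂ)^2) : Polynomial ℂ) = C (s:ℂ) * C (s:ℂ) := by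
    rw [← Polynomial.C_mul, sq]
  simp only [Complex.coe_algebraMap, Complex.ofReal_pow] at *
  simp only [hC4, hC, hC2, hC3]
  linear_combination (C (s:ℂ) * C (s:ℂ)) * h3

end RJP

namespace RJP

variable (k : ℕ) (c s : ℝ)

lemma sum_smul_mulVec {n : Type*} [Fintype n] (t : Finset ℕ) (z : ℕ → ℂ)
    (M : ℕ → Matrix n n ℂ) (v : n → ℂ) :
    (∑ i ∈ t, z i • M i) *ᵥ v = ∑ i ∈ t, z i • (M i *ᵥ v) := by
  funext j
  simp only [Matrix.mulVec, dotProduct, Finset.sum_apply, Matrix.sum_apply,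
    Matrix.smul_apply, Pi.smul_apply, Finset.sum_mul, smul_eq_mul]
  rw [Finset.sum_comm]
  apply Finset.sum_congr rfl
  intro i _
  rw [Finset.mul_sum]
  apply Finset.sum_congr rfl
  intro x _
  ring

lemma aeval_pC : Polynomial.aeval (Ahat k c s) (pC k c s) = 0 := by
  rw [pC_factor, _root_.map_pow, _root_.map_mul, _root_.map_sub, _root_.map_sub, Polynomial.aeval_X,
    Polynomial.aeval_C, Polynomial.aeval_C, Algebra.algebraMap_eq_smul_one,
    Algebra.algebraMap_eq_smul_one]
  have hJ : Ahat k c s - lam c s • 1 = (jordanNil k : Matrix (Fin k) (Fin k) ℂ) := by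
    unfold Ahat; rw [add_sub_cancel_left]
  have c1 : Commute (jordanNil k : Matrix (Fin k) (Fin k) ℂ) (1 : Matrix (Fin k) (Fin k) ℂ) :=
    Commute.one_right _
  have hcomm : Commute ((jordanNil k : Matrix (Fin k) (Fin k) ℂ))
      (Ahat k c s - lam c (-s) • 1) := by
    unfold Ahat
    exact ((c1.smul_right (lam c s)).add_right (Commute.refl _)).sub_right
      (c1.smul_right (lam c (-s)))
  rw [hJ, hcomm.mul_pow, jordanNil_pow_k, zero_mul]

lemma krylov_rel :
    ∑ m ∈ Finset.range (2*k+1), ((pR k c s).coeff m : ℂ) • u k c s m = 0 := by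
  have h0 := aeval_pC k c s
  rw [Polynomial.aeval_eq_sum_range' (n := 2*k+1)
    (by rw [pC_natDegree]; omega) (Ahat k c s)] at h0
  have h1 := congrArg (fun M => M *ᵥ u k c s 0) h0
  simp only [Matrix.zero_mulVec] at h1
  rw [sum_smul_mulVec] at h1
  rw [← h1]
  apply Finset.sum_congr rfl
  intro i _
  rw [pow_mulVec_u]
  unfold pC
  rw [Polynomial.coeff_map]
  rfl



end RJP

namespace RJP

variable (k : ℕ) (c s : ℝ)

lemma conj_lam : (starRingEnd ℂ) (lam c s) = lam c (-s) := by
  simp [lam, Complex.ext_iff]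

lemma taylor_dvd_of_coeff_eq_zero (P : Polynomial ℂ) (z : ℂ) (n : ℕ)
    (h : ∀ m < n, ((Polynomial.taylor z) P).coeff m = 0) :
    (X - C z) ^ n ∣ P := by
  conv_rhs => rw [← Polynomial.sum_taylor_eq P z]
  unfold Polynomial.sum
  apply Finset.dvd_sum
  intro i hi
  have hin : n ≤ i := by
    by_contra hlt
    push_neg at hlt
    exact (Polynomial.mem_support_iff.mp hi) (h i hlt)
  exact Dvd.dvd.mul_left (pow_dvd_pow _ hin) _

lemma indep (hs : s ≠ 0) (d : ℕ → ℝ)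
    (hd : ∑ r ∈ Finset.range (2*k), (d r : ℂ) • u k c s r = 0) :
    ∀ r ∈ Finset.range (2*k), d r = 0 := by
  classical
  set P : Polynomial ℂ := ∑ r ∈ Finset.range (2*k), Polynomial.monomial r ((d r : ℝ) : ℂ)
    with hP
  -- coefficients of P
  have hcoeff : ∀ r ∈ Finset.range (2*k), P.coeff r = ((d r : ℝ) : ℂ) := by
    intro r hr
    rw [hP, Polynomial.finset_sum_coeff]
    rw [Finset.sum_eq_single r]
    · simp
    · intro b _ hb; rw [Polynomial.coeff_monomial, if_neg (by omega)]
    · intro hmem; exact absurd hr hmem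
  -- taylor coefficients at any z
  have htay : ∀ (z : ℂ) (m : ℕ),
      ((Polynomial.taylor z) P).coeff m
        = ∑ r ∈ Finset.range (2*k), (d r : ℂ) * ((r.choose m : ℂ) * z ^ (r - m)) := by
    intro z m
    rw [Polynomial.taylor_coeff, hP, map_sum]
    rw [Polynomial.eval_finset_sum]
    apply Finset.sum_congr rfl
    intro r _
    rw [Polynomial.hasseDeriv_monomial, Polynomial.eval_monomial]
    ring
  -- component identities
  have hcomp : ∀ m < k, ∑ r ∈ Finset.range (2*k),
      (d r : ℂ) * ((r.choose m : ℂ) * (lam c s) ^ (r - m)) = 0 := by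
    intro m hm
    have hik : k - 1 - (k - 1 - m) = m := by omega
    have hi : k - 1 - m < k := by omega
    have := congrFun hd ⟨k - 1 - m, hi⟩
    simp only [Finset.sum_apply, Pi.smul_apply, Pi.zero_apply, smul_eq_mul] at this
    rw [← this]
    apply Finset.sum_congr rfl
    intro r _
    unfold u
    rw [hik]
  -- conjugated component identities
  have hcomp' : ∀ m < k, ∑ r ∈ Finset.range (2*k),
      (d r : ℂ) * ((r.choose m : ℂ) * (lam c (-s)) ^ (r - m)) = 0 := by
    intro m hm
    have h0 := congrArg (starRingEnd ℂ) (hcomp m hm)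
    rw [map_sum, map_zero] at h0
    rw [← h0]
    apply Finset.sum_congr rfl
    intro r _
    rw [_root_.map_mul, _root_.map_mul, _root_.map_pow, conj_lam,
      Complex.conj_ofReal]
    norm_cast
    rw [Complex.conj_natCast]
  -- divisibility
  have hdvd1 : (X - C (lam c s)) ^ k ∣ P := by
    apply taylor_dvd_of_coeff_eq_zero
    intro m hm
    rw [htay]
    exact hcomp m hm
  have hdvd2 : (X - C (lam c (-s))) ^ k ∣ P := by
    apply taylor_dvd_of_coeff_eq_zero
    intro m hm
    rw [htay]
    exact hcomp' m hm
  -- coprime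
  have hne : lam c s - lam c (-s) ≠ 0 := by
    simp [lam, Complex.ext_iff]
    intro h
    exact hs (by linarith)
  have hcop : IsCoprime ((X - C (lam c s)) ^ k) ((X - C (lam c (-s))) ^ k) :=
    (Polynomial.isCoprime_X_sub_C_of_isUnit_sub (IsUnit.mk0 _ hne)).pow
  have hdvd : ((X - C (lam c s)) ^ k) * ((X - C (lam c (-s))) ^ k) ∣ P :=
    hcop.mul_dvd hdvd1 hdvd2
  -- conclude P = 0
  have hPzero : P = 0 := by
    by_contra hP0
    have hdeg := Polynomial.natDegree_le_of_dvd hdvd hP0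
    have hprod : (((X - C (lam c s)) ^ k) * ((X - C (lam c (-s))) ^ k)).natDegree = 2*k := by
      rw [Polynomial.natDegree_mul (pow_ne_zero _ (Polynomial.X_sub_C_ne_zero _))
        (pow_ne_zero _ (Polynomial.X_sub_C_ne_zero _)),
        Polynomial.natDegree_pow, Polynomial.natDegree_pow, Polynomial.natDegree_X_sub_C,
        Polynomial.natDegree_X_sub_C]
      omega
    have hPdeg : P.natDegree ≤ 2*k - 1 := by
      rw [hP]
      apply Polynomial.natDegree_sum_le_of_forall_le
      intro r hr
      refine le_trans (Polynomial.natDegree_monomial_le _) ?_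
      have := Finset.mem_range.mp hr
      omega
    rw [hprod] at hdeg
    rcases Nat.eq_zero_or_pos k with hk | hk
    · subst hk
      simp at hP
      exact hP0 hP
    · omega
  intro r hr
  have := hcoeff r hr
  rw [hPzero] at this
  simp at this
  exact_mod_cast this.symm

end RJP

namespace RJP

open Kronecker

variable (k : ℕ) (c s : ℝ)

def encE : (Fin k × Fin 2) ≃ Fin (2*k) where
  toFun x := ⟨2 * x.1.val + x.2.val, by have := x.1.isLt; have := x.2.isLt; omega⟩
  invFun a := (⟨a.val / 2, by have := a.isLt; omega⟩, ⟨a.val % 2, by omega⟩)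
  left_inv x := by
    have := x.2.isLt
    ext
    · simp; omega
    · simp; omega
  right_inv a := by
    ext
    simp
    omega

def enc (x : Fin k × Fin 2) : ℕ := (encE k x).val

lemma enc_lt (x : Fin k × Fin 2) : enc k x < 2 * k := (encE k x).isLt

/-- realification of a complex vector -/
def rV (z : Fin k → ℂ) : Fin k × Fin 2 → ℝ :=
  fun x => if x.2 = (0 : Fin 2) then (z x.1).re else (z x.1).im

/-- the real matrix from the problem -/
noncomputable def Areal : Matrix (Fin k × Fin 2) (Fin k × Fin 2) ℝ :=
  (1 : Matrix (Fin k) (Fin k) ℝ) ⊗ₖ !![c, -s; s, c] +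
    (jordanNil k : Matrix (Fin k) (Fin k) ℝ) ⊗ₖ (1 : Matrix (Fin 2) (Fin 2) ℝ)

lemma Areal_mulVec (z : Fin k → ℂ) :
    Areal k c s *ᵥ rV k z = rV k (Ahat k c s *ᵥ z) := by
  funext x
  obtain ⟨i, t⟩ := x
  have key : (Areal k c s *ᵥ rV k z) (i, t)
      = (∑ u : Fin 2, !![c, -s; s, c] t u * rV k z (i, u))
        + (if h : i.val + 1 < k then rV k z (⟨i.val+1, h⟩, t) else 0) := by
    unfold Areal
    simp only [Matrix.mulVec, dotProduct, Matrix.add_apply, Matrix.kroneckerMap_apply,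
      add_mul, Finset.sum_add_distrib]
    congr 1
    · rw [Fintype.sum_prod_type]
      rw [Finset.sum_eq_single i]
      · apply Finset.sum_congr rfl
        intro u _
        rw [Matrix.one_apply_eq, one_mul]
      · intro b _ hb
        apply Finset.sum_eq_zero
        intro u _
        rw [Matrix.one_apply_ne (Ne.symm hb), zero_mul, zero_mul]
      · intro hmem; exact absurd (Finset.mem_univ _) hmem
    · rw [Fintype.sum_prod_type]
      have : ∀ j : Fin k, ∑ u : Fin 2,
          (jordanNil k : Matrix (Fin k) (Fin k) ℝ) i j
            * (1 : Matrix (Fin 2) (Fin 2) ℝ) t u * rV k z (j, u)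
          = (if (i:ℕ) + 1 = (j:ℕ) then 1 else 0) * rV k z (j, t) := by
        intro j
        rw [Finset.sum_eq_single t]
        · rw [Matrix.one_apply_eq, mul_one]; rfl
        · intro b _ hb
          rw [Matrix.one_apply_ne (Ne.symm hb), mul_zero, zero_mul]
        · intro hmem; exact absurd (Finset.mem_univ _) hmem
      rw [Finset.sum_congr rfl (fun j _ => this j)]
      exact sum_ite_eqnat k (fun j => rV k z (j, t)) (i.val + 1)
  rw [key]
  have hshift : (if h : i.val + 1 < k then rV k z (⟨i.val+1, h⟩, t) else 0)
      = rV k (fun i' => if h : i'.val + 1 < k then z ⟨i'.val+1, h⟩ else 0) (i, t) := by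
    unfold rV
    by_cases h : i.val + 1 < k
    · simp only [dif_pos h]
    · simp only [dif_neg h]
      by_cases ht : t = 0 <;> simp [ht]
  rw [hshift]
  have hmv : ∀ i' : Fin k, (Ahat k c s *ᵥ z) i'
      = lam c s * z i' + (if h : i'.val + 1 < k then z ⟨i'.val+1, h⟩ else 0) :=
    mulVec_Ahat k c s z
  unfold rV
  simp only [hmv]
  fin_cases t
  · simp only [Fin.sum_univ_two]
    norm_num [Complex.add_re, Complex.mul_re, lam]
    ring
  · simp only [Fin.sum_univ_two]
    norm_num [Complex.add_im, Complex.mul_im, lam]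
    ring

end RJP

namespace RJP

variable (k : ℕ) (c s : ℝ)

lemma enc_symm (t : ℕ) (h : t < 2*k) : enc k ((encE k).symm ⟨t, h⟩) = t := by
  unfold enc
  rw [Equiv.apply_symm_apply]

lemma sum_enc (g : ℕ → ℝ) :
    ∑ r : Fin k × Fin 2, g (enc k r) = ∑ m ∈ Finset.range (2*k), g m := by
  rw [← Equiv.sum_comp (encE k).symm (fun r => g (enc k r)), ← Fin.sum_univ_eq_sum_range]
  apply Finset.sum_congr rfl
  intro a _
  congr 1
  exact enc_symm k a.val a.isLt

lemma sum_enc_delta (g : ℕ → ℝ) (t : ℕ) :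
    ∑ r : Fin k × Fin 2, g (enc k r) * (if enc k r = t then 1 else 0)
      = if t < 2*k then g t else 0 := by
  rw [sum_enc k (fun m => g m * (if m = t then 1 else 0))]
  by_cases h : t < 2*k
  · rw [if_pos h, Finset.sum_eq_single t]
    · simp
    · intro b _ hb; simp [hb]
    · intro hmem; exact absurd (Finset.mem_range.mpr h) hmem
  · rw [if_neg h]
    apply Finset.sum_eq_zero
    intro m hm
    have : m ≠ t := by have := Finset.mem_range.mp hm; omega
    simp [this]

noncomputable def Smat : Matrix (Fin k × Fin 2) (Fin k × Fin 2) ℝ :=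
  Matrix.of fun x r => rV k (u k c s (enc k r)) x

noncomputable def cp : Matrix (Fin k × Fin 2) (Fin k × Fin 2) ℝ :=
  Matrix.of fun r r' =>
    (if enc k r = enc k r' + 1 then 1 else 0)
      + (if enc k r' = 2*k - 1 then -((pR k c s).coeff (enc k r)) else 0)

noncomputable def qpoly : Polynomial ℝ := ∏ j ∈ Finset.range (2*k), (X - C (j:ℝ))

noncomputable def cq : Matrix (Fin k × Fin 2) (Fin k × Fin 2) ℝ :=
  Matrix.of fun r r' =>
    (if enc k r = enc k r' + 1 then 1 else 0)
      + (if enc k r' = 2*k - 1 then -((qpoly k).coeff (enc k r)) else 0)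

lemma u2k_eq (x : Fin k × Fin 2) :
    rV k (u k c s (2*k)) x
      = -∑ m ∈ Finset.range (2*k), (pR k c s).coeff m * rV k (u k c s m) x := by
  have h := congrFun (krylov_rel k c s) x.1
  rw [Finset.sum_range_succ] at h
  simp only [Finset.sum_apply, Pi.smul_apply, Pi.add_apply, Pi.zero_apply, smul_eq_mul] at h
  rw [pR_coeff_top] at h
  unfold rV
  by_cases ht : x.2 = (0 : Fin 2)
  · simp only [if_pos ht]
    have := congrArg Complex.re h
    rw [Complex.add_re, Complex.re_sum, Complex.zero_re] at this
    simp only [Complex.ofReal_one, one_mul, Complex.re_ofReal_mul] at this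
    linarith [this]
  · simp only [if_neg ht]
    have := congrArg Complex.im h
    rw [Complex.add_im, Complex.im_sum, Complex.zero_im] at this
    simp only [Complex.ofReal_one, one_mul, Complex.im_ofReal_mul] at this
    linarith [this]

lemma mul_companion (coef : ℕ → ℝ)
    (hlast : ∀ x : Fin k × Fin 2, rV k (u k c s (2*k)) x
      = -∑ m ∈ Finset.range (2*k), coef m * rV k (u k c s m) x) :
    Areal k c s * Smat k c s
      = Smat k c s * Matrix.of (fun r r' : Fin k × Fin 2 =>
          (if enc k r = enc k r' + 1 then 1 else 0)
            + (if enc k r' = 2*k - 1 then -(coef (enc k r)) else 0)) := by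
  ext x r'
  have hl : (Areal k c s * Smat k c s) x r' = rV k (u k c s (enc k r' + 1)) x := by
    rw [Matrix.mul_apply]
    have : ∀ y, Areal k c s x y * Smat k c s y r'
        = Areal k c s x y * rV k (u k c s (enc k r')) y := fun y => rfl
    rw [Finset.sum_congr rfl (fun y _ => this y)]
    have := congrFun (Areal_mulVec k c s (u k c s (enc k r'))) x
    rw [mulVec_u] at this
    rw [← this]
    rfl
  rw [hl, Matrix.mul_apply]
  simp only [Matrix.of_apply, Smat, mul_add]
  rw [Finset.sum_add_distrib]
  have h1 : ∑ r : Fin k × Fin 2,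
      rV k (u k c s (enc k r)) x * (if enc k r = enc k r' + 1 then 1 else 0)
      = if enc k r' + 1 < 2*k then rV k (u k c s (enc k r' + 1)) x else 0 :=
    sum_enc_delta k (fun m => rV k (u k c s m) x) (enc k r' + 1)
  rw [h1]
  by_cases hc : enc k r' = 2*k - 1
  · have hklt : ¬(enc k r' + 1 < 2*k) := by have := enc_lt k r'; omega
    have h2k : enc k r' + 1 = 2*k := by have := enc_lt k r'; omega
    rw [if_neg hklt, h2k, hlast x, zero_add]
    have h3 : ∑ r : Fin k × Fin 2, rV k (u k c s (enc k r)) x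
          * (if enc k r' = 2*k - 1 then -coef (enc k r) else 0)
        = ∑ m ∈ Finset.range (2*k), rV k (u k c s m) x
          * (if enc k r' = 2*k - 1 then -coef m else 0) :=
      sum_enc k (fun m => rV k (u k c s m) x * (if enc k r' = 2*k - 1 then -coef m else 0))
    rw [h3, ← Finset.sum_neg_distrib]
    apply Finset.sum_congr rfl
    intro m _
    rw [if_pos hc]
    ring
  · have hklt : enc k r' + 1 < 2*k := by have := enc_lt k r'; omega
    rw [if_pos hklt]
    simp only [if_neg hc, mul_zero]
    rw [Finset.sum_const_zero, add_zero]

lemma Areal_mul_cp : Areal k c s * Smat k c s = Smat k c s * cp k c s :=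
  mul_companion k c s _ (u2k_eq k c s)

end RJP

namespace RJP

variable (k : ℕ) (c s : ℝ)

lemma smat_isUnit (hs : s ≠ 0) : IsUnit (Smat k c s) := by
  rw [Matrix.isUnit_iff_isUnit_det, isUnit_iff_ne_zero]
  intro hdet
  obtain ⟨v, hv0, hv⟩ := (Matrix.exists_mulVec_eq_zero_iff).mpr hdet
  set d : ℕ → ℝ := fun m => if h : m < 2*k then v ((encE k).symm ⟨m, h⟩) else 0 with hd
  have hdenc : ∀ r : Fin k × Fin 2, d (enc k r) = v r := by
    intro r
    rw [hd]
    simp only [dif_pos (enc_lt k r)]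
    congr
    exact (encE k).symm_apply_apply r
  have hrel : ∑ m ∈ Finset.range (2*k), ((d m : ℝ) : ℂ) • u k c s m = 0 := by
    funext i
    simp only [Finset.sum_apply, Pi.smul_apply, Pi.zero_apply, smul_eq_mul]
    apply Complex.ext
    · rw [Complex.re_sum, Complex.zero_re]
      have h0 := congrFun hv (i, (0 : Fin 2))
      simp only [Matrix.mulVec, dotProduct, Pi.zero_apply, Smat, Matrix.of_apply] at h0
      simp only [Complex.re_ofReal_mul]
      rw [← sum_enc k (fun m => d m * (u k c s m i).re), ← h0]
      apply Finset.sum_congr rfl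
      intro r _
      rw [hdenc r]
      unfold rV
      norm_num [mul_comm]
    · rw [Complex.im_sum, Complex.zero_im]
      have h0 := congrFun hv (i, (1 : Fin 2))
      simp only [Matrix.mulVec, dotProduct, Pi.zero_apply, Smat, Matrix.of_apply] at h0
      simp only [Complex.im_ofReal_mul]
      rw [← sum_enc k (fun m => d m * (u k c s m i).im), ← h0]
      apply Finset.sum_congr rfl
      intro r _
      rw [hdenc r]
      unfold rV
      norm_num [mul_comm]
  have hz := indep k c s hs d hrel
  apply hv0
  funext r
  have := hz (enc k r) (Finset.mem_range.mpr (enc_lt k r))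
  rw [hdenc r] at this
  rw [this]
  rfl

noncomputable def vt : Matrix (Fin k × Fin 2) (Fin k × Fin 2) ℝ :=
  Matrix.of fun x r => ((enc k x : ℝ)) ^ (enc k r)

lemma vt_isUnit : IsUnit (vt k) := by
  rw [Matrix.isUnit_iff_isUnit_det, isUnit_iff_ne_zero]
  have : vt k
      = ((Matrix.vandermonde (fun a : Fin (2*k) => (a.val : ℝ))).submatrix
          (encE k) (encE k)) := by
    ext x r
    simp [vt, Matrix.vandermonde, enc]
  rw [this, Matrix.det_submatrix_equiv_self, Matrix.det_vandermonde]
  apply Finset.prod_ne_zero_iff.mpr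
  intro i _
  apply Finset.prod_ne_zero_iff.mpr
  intro j hj
  have hij : i < j := Finset.mem_Ioi.mp hj
  intro heq
  rw [sub_eq_zero] at heq
  have hji : (j : ℕ) = (i : ℕ) := Nat.cast_injective heq
  have := Fin.lt_iff_val_lt_val.mp hij
  omega

lemma qpoly_monic : (qpoly k).Monic :=
  Polynomial.monic_prod_of_monic _ _ (fun j _ => Polynomial.monic_X_sub_C _)

lemma qpoly_natDegree : (qpoly k).natDegree = 2*k := by
  unfold qpoly
  rw [Polynomial.natDegree_prod _ _ (fun j _ => Polynomial.X_sub_C_ne_zero _),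
    Finset.sum_congr rfl (fun j _ => Polynomial.natDegree_X_sub_C _)]
  simp [Nat.mul_comm]

lemma qpoly_coeff_top : (qpoly k).coeff (2*k) = 1 := by
  have := (qpoly_monic k).coeff_natDegree
  rwa [qpoly_natDegree] at this

lemma qpoly_eval_zero (x : Fin k × Fin 2) : (qpoly k).eval ((enc k x : ℕ) : ℝ) = 0 := by
  unfold qpoly
  rw [Polynomial.eval_prod]
  apply Finset.prod_eq_zero (Finset.mem_range.mpr (enc_lt k x))
  simp

lemma vt_mul_cq :
    vt k * cq k = Matrix.diagonal (fun x => ((enc k x : ℕ) : ℝ)) * vt k := by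
  ext x r'
  rw [Matrix.mul_apply]
  have hrhs : (Matrix.diagonal (fun x : Fin k × Fin 2 => ((enc k x : ℕ) : ℝ)) * vt k) x r'
      = ((enc k x : ℕ) : ℝ) ^ (enc k r' + 1) := by
    rw [Matrix.diagonal_mul]
    simp [vt, pow_succ, mul_comm]
  rw [hrhs]
  simp only [cq, vt, Matrix.of_apply, mul_add]
  rw [Finset.sum_add_distrib]
  have h1 : ∑ r : Fin k × Fin 2,
      ((enc k x : ℕ) : ℝ) ^ (enc k r) * (if enc k r = enc k r' + 1 then 1 else 0)
      = if enc k r' + 1 < 2*k then ((enc k x : ℕ) : ℝ) ^ (enc k r' + 1) else 0 :=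
    sum_enc_delta k (fun m => ((enc k x : ℕ) : ℝ) ^ m) (enc k r' + 1)
  rw [h1]
  by_cases hc : enc k r' = 2*k - 1
  · have hklt : ¬(enc k r' + 1 < 2*k) := by have := enc_lt k r'; omega
    have h2k : enc k r' + 1 = 2*k := by have := enc_lt k r'; omega
    rw [if_neg hklt, zero_add, h2k]
    have h3 : ∑ r : Fin k × Fin 2, ((enc k x : ℕ) : ℝ) ^ (enc k r)
          * (if enc k r' = 2*k - 1 then -((qpoly k).coeff (enc k r)) else 0)
        = ∑ m ∈ Finset.range (2*k), ((enc k x : ℕ) : ℝ) ^ m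
          * (if enc k r' = 2*k - 1 then -((qpoly k).coeff m) else 0) :=
      sum_enc k (fun m => ((enc k x : ℕ) : ℝ) ^ m
        * (if enc k r' = 2*k - 1 then -((qpoly k).coeff m) else 0))
    rw [h3]
    have heval := qpoly_eval_zero k x
    rw [Polynomial.eval_eq_sum_range' (n := 2*k+1) (by rw [qpoly_natDegree]; omega)] at heval
    rw [Finset.sum_range_succ, qpoly_coeff_top, one_mul] at heval
    have : ∑ m ∈ Finset.range (2*k), ((enc k x : ℕ) : ℝ) ^ m
          * (if enc k r' = 2*k - 1 then -((qpoly k).coeff m) else 0)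
        = -∑ m ∈ Finset.range (2*k), (qpoly k).coeff m * ((enc k x : ℕ) : ℝ) ^ m := by
      rw [← Finset.sum_neg_distrib]
      apply Finset.sum_congr rfl
      intro m _
      rw [if_pos hc]
      ring
    rw [this]
    linarith [heval]
  · have hklt : enc k r' + 1 < 2*k := by have := enc_lt k r'; omega
    rw [if_pos hklt]
    have : ∑ r : Fin k × Fin 2, ((enc k x : ℕ) : ℝ) ^ (enc k r)
          * (if enc k r' = 2*k - 1 then -((qpoly k).coeff (enc k r)) else 0)
        = 0 := by
      apply Finset.sum_eq_zero
      intro r _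
      rw [if_neg hc, mul_zero]
    rw [this, add_zero]

end RJP

namespace RJP

variable (k : ℕ) (c s : ℝ)

noncomputable def dvec : Fin k × Fin 2 → ℝ :=
  fun r => (qpoly k).coeff (enc k r) - (pR k c s).coeff (enc k r)

noncomputable def elast : Fin k × Fin 2 → ℝ :=
  fun r' => if enc k r' = 2*k - 1 then 1 else 0

lemma cp_sub_cq : cp k c s - cq k = Matrix.vecMulVec (dvec k c s) (elast k) := by
  ext r r'
  simp only [Matrix.sub_apply, cp, cq, Matrix.of_apply, Matrix.vecMulVec_apply, dvec, elast]
  by_cases hc : enc k r' = 2*k - 1 <;> simp [hc] <;> ring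

lemma conj_vecMulVec {ι : Type*} [Fintype ι] (M N : Matrix ι ι ℝ) (a b : ι → ℝ) :
    M * Matrix.vecMulVec a b * N
      = Matrix.vecMulVec (M *ᵥ a) (Matrix.vecMul b N) := by
  ext i j
  simp only [Matrix.mul_apply, Matrix.vecMulVec_apply, Matrix.mulVec, Matrix.vecMul,
    dotProduct, Finset.sum_mul, Finset.mul_sum]
  apply Finset.sum_congr rfl
  intro y _
  apply Finset.sum_congr rfl
  intro x _
  ring

lemma mul_diag_mul {ι : Type*} [Fintype ι] [DecidableEq ι] (M N : Matrix ι ι ℝ) (d : ι → ℝ) :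
    M * Matrix.diagonal d * N
      = ∑ j : ι, d j • Matrix.vecMulVec (fun i => M i j) (fun i' => N j i') := by
  ext i i'
  rw [Matrix.mul_apply]
  simp only [Matrix.mul_diagonal, Matrix.sum_apply, Matrix.smul_apply,
    Matrix.vecMulVec_apply, smul_eq_mul]
  apply Finset.sum_congr rfl
  intro y _
  ring

end RJP


open Kronecker in
/-- Over `ℝ`, with `s ≠ 0`, the pair `(C_k(c,s) + J_k ⊗ E_2; E_{2k})` becomes
diagonalizable after subtracting a suitable rank at most one tensor; in particular its
tensor rank is at most `2k + 1`. -/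
theorem real_jordan_pair_perturb_diagonalizable (k : ℕ) (c s : ℝ) (hs : s ≠ 0) :
    (∃ T₁ T₂ : Matrix (Fin k × Fin 2) (Fin k × Fin 2) ℝ, pairDecomp 1 T₁ T₂ ∧
      pairDiagSq
        (((1 : Matrix (Fin k) (Fin k) ℝ) ⊗ₖ !![c, -s; s, c] +
            (jordanNil k : Matrix (Fin k) (Fin k) ℝ) ⊗ₖ (1 : Matrix (Fin 2) (Fin 2) ℝ)) - T₁)
        ((1 : Matrix (Fin k × Fin 2) (Fin k × Fin 2) ℝ) - T₂)) ∧
    pairRank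
      ((1 : Matrix (Fin k) (Fin k) ℝ) ⊗ₖ !![c, -s; s, c] +
        (jordanNil k : Matrix (Fin k) (Fin k) ℝ) ⊗ₖ (1 : Matrix (Fin 2) (Fin 2) ℝ))
      (1 : Matrix (Fin k × Fin 2) (Fin k × Fin 2) ℝ) ≤ 2 * k + 1 := by
  classical
  have hA : ((1 : Matrix (Fin k) (Fin k) ℝ) ⊗ₖ !![c, -s; s, c] +
      (jordanNil k : Matrix (Fin k) (Fin k) ℝ) ⊗ₖ (1 : Matrix (Fin 2) (Fin 2) ℝ))
      = RJP.Areal k c s := rfl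
  rw [hA]
  obtain ⟨SU, hSU⟩ := RJP.smat_isUnit k c s hs
  obtain ⟨VU, hVU⟩ := RJP.vt_isUnit k
  have hAeq : RJP.Areal k c s = RJP.Smat k c s * RJP.cp k c s * (↑SU⁻¹ : Matrix (Fin k × Fin 2) (Fin k × Fin 2) ℝ) := by
    calc RJP.Areal k c s = RJP.Areal k c s * ((↑SU : Matrix (Fin k × Fin 2) (Fin k × Fin 2) ℝ) * ↑SU⁻¹) := by
          rw [Units.mul_inv, Matrix.mul_one]
    _ = (RJP.Areal k c s * RJP.Smat k c s) * ↑SU⁻¹ := by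
          rw [hSU, Matrix.mul_assoc]
    _ = RJP.Smat k c s * RJP.cp k c s * ↑SU⁻¹ := by rw [RJP.Areal_mul_cp]
  set T1 := RJP.Smat k c s * (RJP.cp k c s - RJP.cq k) * (↑SU⁻¹ : Matrix (Fin k × Fin 2) (Fin k × Fin 2) ℝ) with hT1
  have hAT1 : RJP.Areal k c s - T1 = RJP.Smat k c s * RJP.cq k * (↑SU⁻¹ : Matrix (Fin k × Fin 2) (Fin k × Fin 2) ℝ) := by
    rw [hT1, hAeq, Matrix.mul_sub, Matrix.sub_mul, sub_sub_cancel]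
  have hSS : RJP.Smat k c s * (↑SU⁻¹ : Matrix (Fin k × Fin 2) (Fin k × Fin 2) ℝ) = 1 := by
    rw [← hSU]; exact SU.mul_inv
  have hSS' : (↑SU⁻¹ : Matrix (Fin k × Fin 2) (Fin k × Fin 2) ℝ) * RJP.Smat k c s = 1 := by
    rw [← hSU]; exact SU.inv_mul
  have hVV : RJP.vt k * (↑VU⁻¹ : Matrix (Fin k × Fin 2) (Fin k × Fin 2) ℝ) = 1 := by
    rw [← hVU]; exact VU.mul_inv
  have hVV' : (↑VU⁻¹ : Matrix (Fin k × Fin 2) (Fin k × Fin 2) ℝ) * RJP.vt k = 1 := by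
    rw [← hVU]; exact VU.inv_mul
  have cancelS : ∀ X : Matrix (Fin k × Fin 2) (Fin k × Fin 2) ℝ,
      X * (↑SU⁻¹ : Matrix (Fin k × Fin 2) (Fin k × Fin 2) ℝ) * RJP.Smat k c s = X := fun X => by
    rw [Matrix.mul_assoc, hSS', Matrix.mul_one]
  have cancelV : ∀ X : Matrix (Fin k × Fin 2) (Fin k × Fin 2) ℝ,
      X * (↑VU⁻¹ : Matrix (Fin k × Fin 2) (Fin k × Fin 2) ℝ) * RJP.vt k = X := fun X => by
    rw [Matrix.mul_assoc, hVV', Matrix.mul_one]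
  set dfun : Fin k × Fin 2 → ℝ := fun x => ((RJP.enc k x : ℕ) : ℝ) with hdfun
  have hPAQ : (RJP.vt k * (↑SU⁻¹ : Matrix (Fin k × Fin 2) (Fin k × Fin 2) ℝ)) * (RJP.Areal k c s - T1)
        * (RJP.Smat k c s * (↑VU⁻¹ : Matrix (Fin k × Fin 2) (Fin k × Fin 2) ℝ))
      = Matrix.diagonal dfun := by
    rw [hAT1]
    simp only [← Matrix.mul_assoc]
    rw [cancelS (RJP.vt k), cancelS (RJP.vt k * RJP.cq k), RJP.vt_mul_cq,
      Matrix.mul_assoc, hVV, Matrix.mul_one, hdfun]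
  have hPQ1 : (RJP.vt k * (↑SU⁻¹ : Matrix (Fin k × Fin 2) (Fin k × Fin 2) ℝ))
        * (RJP.Smat k c s * (↑VU⁻¹ : Matrix (Fin k × Fin 2) (Fin k × Fin 2) ℝ)) = 1 := by
    simp only [← Matrix.mul_assoc]
    rw [cancelS (RJP.vt k), hVV]
  have hQP1 : (RJP.Smat k c s * (↑VU⁻¹ : Matrix (Fin k × Fin 2) (Fin k × Fin 2) ℝ))
        * (RJP.vt k * (↑SU⁻¹ : Matrix (Fin k × Fin 2) (Fin k × Fin 2) ℝ)) = 1 := by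
    simp only [← Matrix.mul_assoc]
    rw [cancelV (RJP.Smat k c s), hSS]
  have hQDP : RJP.Areal k c s - T1
      = (RJP.Smat k c s * (↑VU⁻¹ : Matrix (Fin k × Fin 2) (Fin k × Fin 2) ℝ)) * Matrix.diagonal dfun
          * (RJP.vt k * (↑SU⁻¹ : Matrix (Fin k × Fin 2) (Fin k × Fin 2) ℝ)) := by
    rw [hAT1]
    calc RJP.Smat k c s * RJP.cq k * (↑SU⁻¹ : Matrix (Fin k × Fin 2) (Fin k × Fin 2) ℝ)
        = RJP.Smat k c s * ((↑VU⁻¹ : Matrix (Fin k × Fin 2) (Fin k × Fin 2) ℝ) * RJP.vt k) * RJP.cq k * ↑SU⁻¹ := by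
          rw [hVV', Matrix.mul_one]
      _ = RJP.Smat k c s * (↑VU⁻¹ : Matrix (Fin k × Fin 2) (Fin k × Fin 2) ℝ) * (RJP.vt k * RJP.cq k) * ↑SU⁻¹ := by
          simp only [Matrix.mul_assoc]
      _ = RJP.Smat k c s * (↑VU⁻¹ : Matrix (Fin k × Fin 2) (Fin k × Fin 2) ℝ)
            * (Matrix.diagonal dfun * RJP.vt k) * ↑SU⁻¹ := by rw [RJP.vt_mul_cq, hdfun]
      _ = (RJP.Smat k c s * (↑VU⁻¹ : Matrix (Fin k × Fin 2) (Fin k × Fin 2) ℝ)) * Matrix.diagonal dfun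
            * (RJP.vt k * ↑SU⁻¹) := by simp only [Matrix.mul_assoc]
  have hT1v : T1 = Matrix.vecMulVec (RJP.Smat k c s *ᵥ RJP.dvec k c s)
      (Matrix.vecMul (RJP.elast k) (↑SU⁻¹ : Matrix (Fin k × Fin 2) (Fin k × Fin 2) ℝ)) := by
    rw [hT1, RJP.cp_sub_cq, RJP.conj_vecMulVec]
  constructor
  · refine ⟨T1, 0, ?_, ?_⟩
    · refine ⟨fun _ => RJP.Smat k c s *ᵥ RJP.dvec k c s,
        fun _ => Matrix.vecMul (RJP.elast k) (↑SU⁻¹ : Matrix (Fin k × Fin 2) (Fin k × Fin 2) ℝ),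
        fun _ => 1, fun _ => 0, ?_, ?_⟩
      · rw [hT1v]
        simp
      · simp
    · refine ⟨VU * SU⁻¹, SU * VU⁻¹, ?_, ?_⟩
      · have hP : ((VU * SU⁻¹ : (Matrix (Fin k × Fin 2) (Fin k × Fin 2) ℝ)ˣ) :
            Matrix (Fin k × Fin 2) (Fin k × Fin 2) ℝ) = RJP.vt k * (↑SU⁻¹ : Matrix (Fin k × Fin 2) (Fin k × Fin 2) ℝ) := by
          rw [Units.val_mul, hVU]
        have hQ : ((SU * VU⁻¹ : (Matrix (Fin k × Fin 2) (Fin k × Fin 2) ℝ)ˣ) :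
            Matrix (Fin k × Fin 2) (Fin k × Fin 2) ℝ)
            = RJP.Smat k c s * (↑VU⁻¹ : Matrix (Fin k × Fin 2) (Fin k × Fin 2) ℝ) := by
          rw [Units.val_mul, hSU]
        rw [hP, hQ, hPAQ]
        exact Matrix.isDiag_diagonal _
      · have hP : ((VU * SU⁻¹ : (Matrix (Fin k × Fin 2) (Fin k × Fin 2) ℝ)ˣ) :
            Matrix (Fin k × Fin 2) (Fin k × Fin 2) ℝ) = RJP.vt k * (↑SU⁻¹ : Matrix (Fin k × Fin 2) (Fin k × Fin 2) ℝ) := by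
          rw [Units.val_mul, hVU]
        have hQ : ((SU * VU⁻¹ : (Matrix (Fin k × Fin 2) (Fin k × Fin 2) ℝ)ˣ) :
            Matrix (Fin k × Fin 2) (Fin k × Fin 2) ℝ)
            = RJP.Smat k c s * (↑VU⁻¹ : Matrix (Fin k × Fin 2) (Fin k × Fin 2) ℝ) := by
          rw [Units.val_mul, hSU]
        rw [hP, hQ, sub_zero, Matrix.mul_one, hPQ1]
        exact Matrix.isDiag_one
  · apply Nat.sInf_le
    show pairDecomp (2*k+1) (RJP.Areal k c s) 1
    refine ⟨fun i => if h : (i : ℕ) < 2*k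
        then (fun r => (RJP.Smat k c s * (↑VU⁻¹ : Matrix (Fin k × Fin 2) (Fin k × Fin 2) ℝ)) r ((RJP.encE k).symm ⟨(i : ℕ), h⟩))
        else RJP.Smat k c s *ᵥ RJP.dvec k c s,
      fun i => if h : (i : ℕ) < 2*k
        then (fun r' => (RJP.vt k * (↑SU⁻¹ : Matrix (Fin k × Fin 2) (Fin k × Fin 2) ℝ)) ((RJP.encE k).symm ⟨(i : ℕ), h⟩) r')
        else Matrix.vecMul (RJP.elast k) (↑SU⁻¹ : Matrix (Fin k × Fin 2) (Fin k × Fin 2) ℝ),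
      fun i => if (i : ℕ) < 2*k then ((i : ℕ) : ℝ) else 1,
      fun i => if (i : ℕ) < 2*k then 1 else 0, ?_, ?_⟩
    · have hsplit : RJP.Areal k c s = (RJP.Areal k c s - T1) + T1 := (sub_add_cancel _ _).symm
      rw [hsplit, hQDP, RJP.mul_diag_mul, hT1v, Fin.sum_univ_castSucc]
      congr 1
      · rw [← Equiv.sum_comp (RJP.encE k).symm
          (fun j => dfun j • Matrix.vecMulVec
            (fun r => (RJP.Smat k c s * (↑VU⁻¹ : Matrix (Fin k × Fin 2) (Fin k × Fin 2) ℝ)) r j)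
            (fun r' => (RJP.vt k * (↑SU⁻¹ : Matrix (Fin k × Fin 2) (Fin k × Fin 2) ℝ)) j r'))]
        apply Finset.sum_congr rfl
        intro i _
        have hlt : ((Fin.castSucc i : Fin (2*k+1)) : ℕ) < 2*k := i.isLt
        simp only [dif_pos hlt, if_pos hlt]
        have hfin : (⟨((Fin.castSucc i : Fin (2*k+1)) : ℕ), hlt⟩ : Fin (2*k)) = i := by
          apply Fin.ext; rfl
        rw [hfin]
        have hd : dfun ((RJP.encE k).symm i) = ((i : ℕ) : ℝ) := by
          rw [hdfun]
          have := RJP.enc_symm k (i : ℕ) i.isLt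
          simp only []
          rw [show (⟨(i : ℕ), i.isLt⟩ : Fin (2*k)) = i from Fin.ext rfl] at this
          rw [this]
        rw [hd, Fin.coe_castSucc]
      · have hnlt : ¬(((Fin.last (2*k)) : ℕ) < 2*k) := by simp
        simp only [dif_neg hnlt, if_neg hnlt, one_smul]
    · have h1eq : (1 : Matrix (Fin k × Fin 2) (Fin k × Fin 2) ℝ)
          = (RJP.Smat k c s * (↑VU⁻¹ : Matrix (Fin k × Fin 2) (Fin k × Fin 2) ℝ))
              * Matrix.diagonal (fun _ : Fin k × Fin 2 => (1:ℝ))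
              * (RJP.vt k * (↑SU⁻¹ : Matrix (Fin k × Fin 2) (Fin k × Fin 2) ℝ)) := by
        rw [Matrix.diagonal_one, Matrix.mul_one, hQP1]
      rw [h1eq, RJP.mul_diag_mul, Fin.sum_univ_castSucc]
      have hnlt : ¬(((Fin.last (2*k)) : ℕ) < 2*k) := by simp
      simp only [dif_neg hnlt, if_neg hnlt, zero_smul, add_zero]
      rw [← Equiv.sum_comp (RJP.encE k).symm
        (fun j => (1:ℝ) • Matrix.vecMulVec
          (fun r => (RJP.Smat k c s * (↑VU⁻¹ : Matrix (Fin k × Fin 2) (Fin k × Fin 2) ℝ)) r j)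
          (fun r' => (RJP.vt k * (↑SU⁻¹ : Matrix (Fin k × Fin 2) (Fin k × Fin 2) ℝ)) j r'))]
      apply Finset.sum_congr rfl
      intro i _
      have hlt : ((Fin.castSucc i : Fin (2*k+1)) : ℕ) < 2*k := i.isLt
      simp only [dif_pos hlt, if_pos hlt]
      have hfin : (⟨((Fin.castSucc i : Fin (2*k+1)) : ℕ), hlt⟩ : Fin (2*k)) = i := by
        apply Fin.ext; rfl
      rw [hfin]
end

section
/- Let F = ℝ or ℂ, let A_j = (E_{n_j}; x E_{n_j} + J_{n_j}) for j = 1, …, ℓ with n_j ≥ 2, and let X be an arbitrary n'×n' matrix. Then the tensor rank over F of the block diagonal tensor Diag(A_1, …, A_ℓ, (E_{n'}; X)) is at least Σ_{j=1}^ℓ n_j + n' + ℓ. -/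
open Matrix BigOperators

/-!
Write `C = B - x • 1` and `N = Σ nⱼ + n'`. A decomposition of `(1; B)` into `r` rank-one terms
yields `1 = A diag(α) B'` and `C = A diag(γ) B'`. For generic `μ` the matrix `M = 1 - μ C` is
invertible and `αᵢ - μ γᵢ` vanishes only where `γᵢ` does, so `M⁻¹ C = P D B'` with `D` diagonal
and `P B' = 1`. Compressing a diagonal map this way creates at most `dim ker P = r - N`
dimensions of `ker ⊓ range`. Since `M` commutes with `C`, `M⁻¹ C` and `C` have the same
`ker ⊓ range`, and for `C` it contains the `ℓ` vectors `e_{j,0} = C e_{j,1}`, one per Jordan block.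
-/

open Module LinearMap

section

variable {F U : Type*} [Field F] [AddCommGroup U] [Module F U]

theorem finrank_le_of_le_range_sup [FiniteDimensional F U] {D : U →ₗ[F] U}
    (hD : Disjoint (ker D) (range D)) {W N : Submodule F U} (hW : W ≤ range D ⊔ N)
    (hDW : W.map D ≤ N) : finrank F W ≤ finrank F N := by
  set R := range D
  have hmaps : ∀ w : ↥(W ⊓ R), D w ∈ N ⊓ R := fun w => ⟨hDW ⟨w, w.2.1, rfl⟩, ⟨w, rfl⟩⟩
  have hinf : finrank F ↥(W ⊓ R) ≤ finrank F ↥(N ⊓ R) := by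
    refine finrank_le_finrank_of_injective (f := (D.domRestrict _).codRestrict _ hmaps) ?_
    rw [← ker_eq_bot, eq_bot_iff]
    intro w hw
    have hDw : D w = 0 := congrArg Subtype.val hw
    exact Subtype.ext (Submodule.disjoint_def.1 hD w hDw w.2.2)
  have hsup : finrank F ↥(W ⊔ R) ≤ finrank F ↥(N ⊔ R) :=
    Submodule.finrank_mono (sup_le (hW.trans_eq (sup_comm _ _)) le_sup_right)
  have hW' := Submodule.finrank_sup_add_finrank_inf_eq W R
  have hN' := Submodule.finrank_sup_add_finrank_inf_eq N R
  omega

theorem finrank_ker_inf_range_comp_le [FiniteDimensional F U] {V : Type*} [AddCommGroup V]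
    [Module F V] {P : U →ₗ[F] V} {S : V →ₗ[F] U} (hPS : P ∘ₗ S = LinearMap.id) {D : U →ₗ[F] U}
    (hD : Disjoint (ker D) (range D)) :
    finrank F ↥(ker (P ∘ₗ D ∘ₗ S) ⊓ range (P ∘ₗ D ∘ₗ S)) ≤ finrank F (ker P) := by
  have hPSv : ∀ v, P (S v) = v := fun v => congr($hPS v)
  rw [(Submodule.equivMapOfInjective S (injective_of_comp_eq_id S P hPS) _).finrank_eq]
  refine finrank_le_of_le_range_sup hD ?_ ?_
  · rintro _ ⟨_, ⟨-, w, rfl⟩, rfl⟩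
    -- `S (P D S w)` differs from `D S w` by an element of `ker P`
    refine Submodule.mem_sup.2 ⟨D (S w), ⟨_, rfl⟩, S (P (D (S w))) - D (S w), ?_, by abel⟩
    simp [hPSv]
  · rintro _ ⟨_, ⟨v, ⟨hv, -⟩, rfl⟩, rfl⟩
    exact hv

end

section

variable {F : Type*} [Field F] {ι : Type*} [Fintype ι] [DecidableEq ι]

theorem disjoint_ker_range_diagonal (d : ι → F) :
    Disjoint (ker (diagonal d).mulVecLin) (range (diagonal d).mulVecLin) := by
  rw [Submodule.disjoint_def]
  rintro _ hv ⟨w, rfl⟩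
  funext i
  have hi : d i * (d i * w i) = 0 := by simpa [mulVec_diagonal] using congr_fun hv i
  simpa [mulVec_diagonal, or_self_left] using hi

theorem ker_inf_range_inv_mul_of_commute {M C : Matrix ι ι F} (hM : IsUnit M.det)
    (hMC : Commute M C) :
    ker (M⁻¹ * C).mulVecLin ⊓ range (M⁻¹ * C).mulVecLin =
      ker C.mulVecLin ⊓ range C.mulVecLin := by
  have hinv : M⁻¹ * C = C * M⁻¹ := calc
    M⁻¹ * C = M⁻¹ * (C * M) * M⁻¹ := by
      rw [Matrix.mul_assoc, Matrix.mul_assoc, mul_nonsing_inv _ hM, Matrix.mul_one]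
    _ = C * M⁻¹ := by
      rw [← hMC.eq, ← Matrix.mul_assoc, nonsing_inv_mul _ hM, Matrix.one_mul]
  have hinj : ker M⁻¹.mulVecLin = ⊥ := ker_eq_bot_of_injective <|
    injective_of_comp_eq_id _ M.mulVecLin <| by
      rw [← mulVecLin_mul, mul_nonsing_inv _ hM, mulVecLin_one]
  have hsurj : range M⁻¹.mulVecLin = ⊤ := range_eq_top_of_surjective _ <|
    surjective_of_comp_eq_id M.mulVecLin _ <| by
      rw [← mulVecLin_mul, nonsing_inv_mul _ hM, mulVecLin_one]
  rw [mulVecLin_mul, ker_comp_of_ker_eq_bot _ hinj, ← mulVecLin_mul, hinv, mulVecLin_mul,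
    range_comp_of_range_eq_top _ hsurj]

theorem finite_setOf_not_isUnit_det_one_sub_smul (C : Matrix ι ι F) :
    {μ : F | ¬IsUnit (1 - μ • C).det}.Finite := by
  have hroots : ∀ μ : F, C.charpolyRev.eval μ = (1 - μ • C).det := by
    intro μ
    rw [charpolyRev, ← Polynomial.coe_evalRingHom, RingHom.map_det]
    congr 1
    ext i j
    by_cases h : i = j <;> simp [h, one_apply] <;> ring
  have hne : C.charpolyRev ≠ 0 := fun h => by simpa [h] using C.eval_charpolyRev
  refine (Polynomial.finite_setOfPred_isRoot hne).subset fun μ hμ => ?_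
  simpa [Polynomial.IsRoot, hroots] using hμ

end

theorem sum_smul_vecMulVec_eq_mul_diagonal_mul {R m n κ : Type*} [CommSemiring R] [Fintype κ]
    [DecidableEq κ] (a : κ → m → R) (b : κ → n → R) (c : κ → R) :
    ∑ i, c i • vecMulVec (a i) (b i) = (of a)ᵀ * diagonal c * of b := by
  ext p q
  simp only [Matrix.sum_apply, Matrix.smul_apply, vecMulVec_apply, mul_apply, transpose_apply,
    of_apply, smul_eq_mul, diagonal_apply, mul_ite, mul_zero, Finset.sum_ite_eq', Finset.mem_univ,
    if_true]
  exact Finset.sum_congr rfl fun i _ => by ring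

theorem pairDecomp.sub_smul {F : Type*} [Field F] {m n : Type*} [Fintype m] [Fintype n] {r : ℕ}
    {A B : Matrix m n F} (h : pairDecomp r A B) (x : F) : pairDecomp r A (B - x • A) := by
  obtain ⟨a, b, α, β, rfl, rfl⟩ := h
  refine ⟨a, b, α, β - x • α, rfl, ?_⟩
  simp only [Finset.smul_sum, ← Finset.sum_sub_distrib, smul_smul, Pi.sub_apply, Pi.smul_apply,
    smul_eq_mul, ← _root_.sub_smul]

theorem exists_pairDecomp {F : Type*} [Field F] {m n : Type*} [Fintype m] [Fintype n]
    (A B : Matrix m n F) : ∃ r, pairDecomp r A B := by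
  classical
  let e := Fintype.equivFin (m × n)
  refine ⟨_, fun k => Pi.single (e.symm k).1 1, fun k => Pi.single (e.symm k).2 1,
    fun k => A (e.symm k).1 (e.symm k).2, fun k => B (e.symm k).1 (e.symm k).2, ?_, ?_⟩ <;>
  · rw [← e.sum_comp]
    ext i j
    simp [vecMulVec_apply, Pi.single_apply, Fintype.sum_prod_type, Matrix.sum_apply]

section

variable {F : Type*} [Field F] [Infinite F] {ι : Type*} [Fintype ι] [DecidableEq ι]

theorem exists_isUnit_det_one_sub_smul_and_sub_mul_ne_zero {κ : Type*} [Finite κ]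
    (C : Matrix ι ι F) (α γ : κ → F) :
    ∃ μ : F, IsUnit (1 - μ • C).det ∧ ∀ i, γ i ≠ 0 → α i - μ * γ i ≠ 0 := by
  have hbad := (finite_setOf_not_isUnit_det_one_sub_smul C).union (Set.finite_range (α / γ))
  obtain ⟨μ, hμ⟩ := hbad.infinite_compl.nonempty
  simp only [Set.mem_compl_iff, Set.mem_union, Set.mem_ofPred_eq, not_or, not_not] at hμ
  refine ⟨μ, hμ.1, fun i hγ hαγ => hμ.2 ⟨i, ?_⟩⟩
  rw [Pi.div_apply, div_eq_iff hγ]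
  linear_combination hαγ

theorem pairDecomp.card_add_finrank_ker_inf_range_le {C : Matrix ι ι F} {r : ℕ}
    (h : pairDecomp r 1 C) :
    Fintype.card ι + finrank F ↥(ker C.mulVecLin ⊓ range C.mulVecLin) ≤ r := by
  obtain ⟨a, b, α, γ, h1, hC⟩ := h
  obtain ⟨μ, hM, hμ⟩ := exists_isUnit_det_one_sub_smul_and_sub_mul_ne_zero C α γ
  set M := 1 - μ • C
  set t := α - μ • γ
  -- `d i = γ i / 0 = 0` where `t i = 0`; the choice of `μ` makes `γ i = 0` there too
  set d := γ / t
  have hγ : γ = t * d := funext fun i => by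
    by_cases ht : t i = 0
    · by_contra hne
      exact hμ i (by simpa [ht] using hne) (by simpa [t] using ht)
    · simp [d, mul_div_cancel₀ _ ht]
  rw [sum_smul_vecMulVec_eq_mul_diagonal_mul] at h1 hC
  set A := (of a)ᵀ
  set B := of b
  have hMfac : M = A * diagonal t * B := by
    rw [show diagonal t = diagonal α - μ • diagonal γ by rw [← diagonal_smul, diagonal_sub]; rfl,
      Matrix.mul_sub, Matrix.sub_mul, Matrix.mul_smul, Matrix.smul_mul, ← h1, ← hC]
  set P := M⁻¹ * (A * diagonal t)
  have hPB : P * B = 1 := by rw [Matrix.mul_assoc, ← hMfac, nonsing_inv_mul _ hM]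
  have hPDB : P * diagonal d * B = M⁻¹ * C := by
    rw [hC, hγ, show diagonal (t * d) = diagonal t * diagonal d from
      (diagonal_mul_diagonal t d).symm]
    simp only [P, Matrix.mul_assoc]
  have hPB' : P.mulVecLin ∘ₗ B.mulVecLin = LinearMap.id := by
    rw [← mulVecLin_mul, hPB, mulVecLin_one]
  have hMC : Commute M C := (Commute.one_left C).sub_left ((Commute.refl C).smul_left μ)
  have hkerP : Fintype.card ι + finrank F (ker P.mulVecLin) = r := by
    have := P.mulVecLin.finrank_range_add_finrank_ker
    rwa [range_eq_top_of_surjective _ (surjective_of_comp_eq_id _ _ hPB'), finrank_top,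
      finrank_fintype_fun_eq_card, finrank_fintype_fun_eq_card, Fintype.card_fin] at this
  have := finrank_ker_inf_range_comp_le hPB' (disjoint_ker_range_diagonal d)
  rw [← mulVecLin_mul, ← mulVecLin_mul, ← Matrix.mul_assoc, hPDB,
    ker_inf_range_inv_mul_of_commute hM hMC] at this
  omega

end

theorem card_add_finrank_ker_inf_range_le_pairRank {F ι : Type*} [Field F] [Infinite F]
    [Fintype ι] [DecidableEq ι] (B : Matrix ι ι F) (x : F) :
    Fintype.card ι + finrank F ↥(ker (B - x • 1).mulVecLin ⊓ range (B - x • 1).mulVecLin) ≤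
      pairRank 1 B :=
  le_csInf (exists_pairDecomp 1 B) fun _ h => (h.sub_smul x).card_add_finrank_ker_inf_range_le

section Jordan

variable {F : Type*} [Field F] {ℓ n' : ℕ}

def jordanBlockDiag (nj : Fin ℓ → ℕ) (x : F) (X : Matrix (Fin n') (Fin n') F) :
    Matrix ((Σ j : Fin ℓ, Fin (nj j)) ⊕ Fin n') ((Σ j : Fin ℓ, Fin (nj j)) ⊕ Fin n') F :=
  fromBlocks (blockDiagonal' fun j => x • 1 + jordanNil (nj j)) 0 0 X

variable {nj : Fin ℓ → ℕ} (x : F) (X : Matrix (Fin n') (Fin n') F)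

theorem jordanBlockDiag_sub_smul_one_mulVec_single_zero {j : Fin ℓ} (h : 0 < nj j) :
    (jordanBlockDiag nj x X - x • 1) *ᵥ Pi.single (.inl ⟨j, ⟨0, h⟩⟩) 1 = 0 := by
  ext (⟨j', c⟩ | i)
  · by_cases hj : j' = j
    · subst hj
      simp [jordanBlockDiag, blockDiagonal'_apply, jordanNil, one_apply, Fin.ext_iff]
    · simp [jordanBlockDiag, blockDiagonal'_apply, one_apply, hj]
  · simp [jordanBlockDiag]

theorem jordanBlockDiag_sub_smul_one_mulVec_single_one {j : Fin ℓ} (h : 1 < nj j) :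
    (jordanBlockDiag nj x X - x • 1) *ᵥ Pi.single (.inl ⟨j, ⟨1, h⟩⟩) 1 =
      Pi.single (.inl ⟨j, ⟨0, by omega⟩⟩) 1 := by
  ext (⟨j', c⟩ | i)
  · by_cases hj : j' = j
    · subst hj
      by_cases hc : (c : ℕ) = 1 <;>
        simp [jordanBlockDiag, blockDiagonal'_apply, jordanNil, one_apply, Pi.single_apply,
          Fin.ext_iff, hc]
    · simp [jordanBlockDiag, blockDiagonal'_apply, one_apply, hj]
  · simp [jordanBlockDiag]

theorem card_le_finrank_ker_inf_range_jordanBlockDiag (hnj : ∀ j, 2 ≤ nj j) :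
    ℓ ≤ finrank F ↥(ker (jordanBlockDiag nj x X - x • 1).mulVecLin ⊓
      range (jordanBlockDiag nj x X - x • 1).mulVecLin) := by
  let e : Fin ℓ → (Σ j : Fin ℓ, Fin (nj j)) ⊕ Fin n' := fun j => .inl ⟨j, ⟨0, by grind⟩⟩
  have he : Function.Injective e := fun j j' h => (Sigma.mk.inj_iff.1 (Sum.inl_injective h)).1
  have hu : LinearIndependent F fun j => (Pi.single (e j) 1 : _ → F) := by
    simpa [Function.comp_def] using (Pi.basisFun F _).linearIndependent.comp e he
  have hchain : Set.range (fun j => (Pi.single (e j) 1 : _ → F)) ⊆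
      ker (jordanBlockDiag nj x X - x • 1).mulVecLin ⊓
        range (jordanBlockDiag nj x X - x • 1).mulVecLin := by
    rintro _ ⟨j, rfl⟩
    exact ⟨jordanBlockDiag_sub_smul_one_mulVec_single_zero x X _,
      _, jordanBlockDiag_sub_smul_one_mulVec_single_one x X (by grind)⟩
  calc ℓ = finrank F ↥(Submodule.span F (Set.range fun j => (Pi.single (e j) 1 : _ → F))) := by
        rw [finrank_span_eq_card hu, Fintype.card_fin]
    _ ≤ _ := Submodule.finrank_mono (Submodule.span_le.2 hchain)

end Jordan

/-- Lower bound for the rank of `Diag(A_1, …, A_ℓ, (E_{n'}; X))` where each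
`A_j = (E_{n_j}; x E_{n_j} + J_{n_j})` with `n_j ≥ 2`. -/
theorem pairRank_jordan_blockDiag_lower {F : Type*} [RCLike F] {ℓ n' : ℕ}
    (nj : Fin ℓ → ℕ) (hnj : ∀ j, 2 ≤ nj j) (x : F)
    (X : Matrix (Fin n') (Fin n') F) :
    (∑ j, nj j) + n' + ℓ ≤
      pairRank
        (1 : Matrix ((Σ j : Fin ℓ, Fin (nj j)) ⊕ Fin n')
              ((Σ j : Fin ℓ, Fin (nj j)) ⊕ Fin n') F)
        (Matrix.of fun p q =>
          match p, q with
          | Sum.inl ⟨j, a⟩, Sum.inl ⟨j', b⟩ =>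
              if j = j' then
                if (a : ℕ) = (b : ℕ) then x
                else if (a : ℕ) + 1 = (b : ℕ) then 1 else 0
              else 0
          | Sum.inr i, Sum.inr i' => X i i'
          | _, _ => 0) := by
  suffices (∑ j, nj j) + n' + ℓ ≤ pairRank 1 (jordanBlockDiag nj x X) by
    convert this using 2
    ext (⟨j, a⟩ | i) (⟨j', b⟩ | i')
    · by_cases hj : j = j'
      · subst hj
        by_cases hab : (a : ℕ) = b <;>
          simp [jordanBlockDiag, blockDiagonal'_apply, jordanNil, one_apply, Fin.ext_iff, hab]
      · simp [jordanBlockDiag, blockDiagonal'_apply, hj]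
    all_goals rfl
  have hrank := card_add_finrank_ker_inf_range_le_pairRank (jordanBlockDiag nj x X) x
  have hchains := card_le_finrank_ker_inf_range_jordanBlockDiag x X hnj
  simp only [Fintype.card_sum, Fintype.card_sigma, Fintype.card_fin] at hrank
  omega
end

section
/- Over the field GF(2), for the matrix A = [[0,0,1],[1,0,1],[0,1,0]], the tensor rank of (E_3; A) is at least 5. -/
open Matrix BigOperators

/-- If an invertible `3 × 3` matrix is a sum of rank-one matrices indexed by a finset `s`,
then `s` has at least `3` elements. -/
lemma card_ge_of_unit {r : ℕ} (a b : Fin r → Fin 3 → ZMod 2) (s : Finset (Fin r))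
    (M : Matrix (Fin 3) (Fin 3) (ZMod 2)) (hM : IsUnit M)
    (h : M = ∑ i ∈ s, vecMulVec (a i) (b i)) : 3 ≤ s.card := by
  have hfact : M = (Matrix.of fun j (i : s) => a i j) * (Matrix.of fun (i : s) k => b i k) := by
    subst h; ext j k
    simp only [Matrix.mul_apply, Matrix.sum_apply, vecMulVec_apply, Matrix.of_apply]
    rw [← Finset.sum_attach s (fun i => a i j * b i k)]
    rfl
  have h1 : M.rank = 3 := by
    rw [Matrix.rank_of_isUnit M hM]; simp
  have h2 : M.rank ≤ s.card := by
    rw [hfact]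
    calc ((Matrix.of fun j (i : s) => a i j) * (Matrix.of fun (i : s) k => b i k)).rank
        ≤ (Matrix.of fun j (i : s) => a i j).rank := Matrix.rank_mul_le_left _ _
      _ ≤ Fintype.card s := Matrix.rank_le_card_width _
      _ = s.card := Fintype.card_coe s
  omega

/-- Over `GF(2)` a sum of scaled matrices is the sum over those indices where the scalar is 1. -/
lemma smul_sum_filter {r : ℕ} (γ : Fin r → ZMod 2) (M : Fin r → Matrix (Fin 3) (Fin 3) (ZMod 2)) :
    ∑ i, γ i • M i = ∑ i ∈ Finset.univ.filter (fun i => γ i = 1), M i := by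
  rw [Finset.sum_filter]
  refine Finset.sum_congr rfl fun i _ => ?_
  by_cases h : γ i = 1
  · simp [h]
  · have h0 : ∀ x : ZMod 2, ¬x = 1 → x = 0 := by decide
    have : γ i = 0 := h0 _ h
    simp [this]

/-- Over `GF(2)`, the pair `(E_3; A)` with `A = [[0,0,1],[1,0,1],[0,1,0]]` has tensor rank
at least `5`. -/
theorem pairRank_gf2_ge_five :
    5 ≤ pairRank (1 : Matrix (Fin 3) (Fin 3) (ZMod 2))
        (!![0, 0, 1; 1, 0, 1; 0, 1, 0] : Matrix (Fin 3) (Fin 3) (ZMod 2)) := by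
  have h9 : pairDecomp 9 (1 : Matrix (Fin 3) (Fin 3) (ZMod 2))
      (!![0, 0, 1; 1, 0, 1; 0, 1, 0] : Matrix (Fin 3) (Fin 3) (ZMod 2)) := by
    refine ⟨fun i k => if (k : ℕ) = (i : ℕ) / 3 then 1 else 0,
      fun i k => if (k : ℕ) = (i : ℕ) % 3 then 1 else 0,
      fun i => if (i : ℕ) / 3 = (i : ℕ) % 3 then 1 else 0,
      ![0,0,1,1,0,1,0,1,0], ?_, ?_⟩ <;> decide
  refine le_csInf ⟨9, h9⟩ fun r hr => ?_
  obtain ⟨a, b, α, β, hI, hA⟩ := hr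
  set A : Matrix (Fin 3) (Fin 3) (ZMod 2) := !![0, 0, 1; 1, 0, 1; 0, 1, 0] with hAdef
  have hIA : (1 + A : Matrix (Fin 3) (Fin 3) (ZMod 2))
      = ∑ i, (α i + β i) • Matrix.vecMulVec (a i) (b i) := by
    rw [hI, hA, ← Finset.sum_add_distrib]
    exact Finset.sum_congr rfl fun i _ => (add_smul _ _ _).symm
  have hS := card_ge_of_unit a b _ _ isUnit_one (hI.trans (smul_sum_filter α _))
  have hT : 3 ≤ (Finset.univ.filter (fun i => β i = 1)).card := by
    refine card_ge_of_unit a b _ A ?_ (hA.trans (smul_sum_filter β _))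
    rw [Matrix.isUnit_iff_isUnit_det]
    simp [hAdef, Matrix.det_fin_three]
  have hU : 3 ≤ (Finset.univ.filter (fun i => α i + β i = 1)).card := by
    refine card_ge_of_unit a b _ (1 + A) ?_ (hIA.trans (smul_sum_filter _ _))
    rw [Matrix.isUnit_iff_isUnit_det]
    norm_num [hAdef, Matrix.det_fin_three, Matrix.one_apply]
    decide
  have hsum : (Finset.univ.filter (fun i => α i = 1)).card +
      (Finset.univ.filter (fun i => β i = 1)).card +
      (Finset.univ.filter (fun i => α i + β i = 1)).card ≤ 2 * r := by
    simp only [Finset.card_filter]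
    rw [← Finset.sum_add_distrib, ← Finset.sum_add_distrib]
    calc (∑ i : Fin r, (((if α i = 1 then 1 else 0) + if β i = 1 then 1 else 0)
            + if α i + β i = 1 then 1 else 0))
        ≤ ∑ _i : Fin r, 2 := by
          refine Finset.sum_le_sum fun i _ => ?_
          have key : ∀ x y : ZMod 2, ((if x = 1 then (1:ℕ) else 0) + if y = 1 then 1 else 0)
              + (if x + y = 1 then 1 else 0) ≤ 2 := by decide
          exact key (α i) (β i)
      _ = 2 * r := by simp [mul_comm]
  omega
end
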